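/- arXiv:0909.1970 — 9 statements merged into one kernel-verified Lean document; each statement's English description precedes it below -/
import Mathlib

section
/- For all integers l ≥ 1, k ≥ 1, and n ≥ k−1, the maximum number of columns of a simple n-row matrix with entries in {0,…,l} that contains no K_k^l as a submatrix equals ∑_{i=0}^{k-1} l^{n−i} · binomial(n, i). -/
/-- `F` is a submatrix of `M` (up to row/column permutations): there are injections
selecting rows and columns of `M` giving `F`. -/
def IsSubmatrix {α : Type*} {k c n m : ℕ} (F : Fin k → Fin c → α) (M : Fin n → Fin m → α) :
    Prop :=
  ∃ r : Fin k → Fin n, ∃ s : Fin c → Fin m,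
    Function.Injective r ∧ Function.Injective s ∧ ∀ i j, M (r i) (s j) = F i j

/-- A matrix is simple if its columns are pairwise distinct. -/
def Simple' {α : Type*} {n m : ℕ} (M : Fin n → Fin m → α) : Prop :=
  ∀ j₁ j₂ : Fin m, (∀ i, M i j₁ = M i j₂) → j₁ = j₂

/-- `C` occurs as a column of `M`. -/
def IsCol {α : Type*} {n m : ℕ} (M : Fin n → Fin m → α) (C : Fin n → α) : Prop :=
  ∃ j, ∀ i, M i j = C i

/-- The matrix `[M, C]` obtained by appending the column `C` to `M`. -/
def addCol {α : Type*} {n m : ℕ} (M : Fin n → Fin m → α) (C : Fin n → α) :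
    Fin n → Fin (m + 1) → α :=
  fun i j => if h : (j : ℕ) < m then M i ⟨j, h⟩ else C i

/-- `M` is `F`-saturated: simple, `F`-free, and adding any missing column creates `F`. -/
def Saturated {α : Type*} {k c n m : ℕ} (F : Fin k → Fin c → α) (M : Fin n → Fin m → α) :
    Prop :=
  Simple' M ∧ ¬ IsSubmatrix F M ∧
    ∀ C : Fin n → α, ¬ IsCol M C → IsSubmatrix F (addCol M C)

/-- The set of sizes (numbers of columns) of `F`-saturated `n`-row matrices. -/
def satSet {α : Type*} {k c : ℕ} (F : Fin k → Fin c → α) (n : ℕ) : Set ℕ :=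
  {m | ∃ M : Fin n → Fin m → α, Saturated F M}

/-- The set of sizes of simple `F`-free `n`-row matrices. -/
def forbSet {α : Type*} {k c : ℕ} (F : Fin k → Fin c → α) (n : ℕ) : Set ℕ :=
  {m | ∃ M : Fin n → Fin m → α, Simple' M ∧ ¬ IsSubmatrix F M}

/-- `K_k`: the `k × 2^k` 0-1 matrix of all distinct 0-1 columns of length `k`. -/
def Kfull (k : ℕ) : Fin k → Fin (2 ^ k) → Bool :=
  fun i j => Nat.testBit j.val i.val

/-- `K_k^l`: the `k × (l+1)^k` matrix of all distinct `k`-columns over `{0,…,l}`. -/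
def Kgen (k l : ℕ) : Fin k → Fin ((l + 1) ^ k) → Fin (l + 1) :=
  fun i j => ⟨(j.val / (l + 1) ^ i.val) % (l + 1), Nat.mod_lt _ (Nat.succ_pos l)⟩

section ForbProof
open Finset

def lcoords {l n : ℕ} (c : Fin n → Fin (l+1)) : Finset (Fin n) :=
  univ.filter (fun i => c i = Fin.last l)

def goodCols (l k n : ℕ) : Finset (Fin n → Fin (l+1)) :=
  univ.filter (fun c => (lcoords c).card < k)

lemma card_exact {l n : ℕ} (T : Finset (Fin n)) :
    (univ.filter (fun c : Fin n → Fin (l+1) => lcoords c = T)).card = l ^ (n - T.card) := by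
  have h1 : univ.filter (fun c : Fin n → Fin (l+1) => lcoords c = T) =
      Fintype.piFinset (fun i => if i ∈ T then {Fin.last l} else univ.erase (Fin.last l)) := by
    ext c
    simp only [mem_filter, mem_univ, true_and, Fintype.mem_piFinset]
    constructor
    · intro h i
      split_ifs with hi
      · have : i ∈ lcoords c := h ▸ hi
        simp only [lcoords, mem_filter] at this
        simp [this.2]
      · have : i ∉ lcoords c := fun hm => hi (h ▸ hm)
        simp only [lcoords, mem_filter, mem_univ, true_and] at this
        exact mem_erase.mpr ⟨this, mem_univ _⟩
    · intro h
      ext i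
      simp only [lcoords, mem_filter, mem_univ, true_and]
      have := h i
      split_ifs at this with hi
      · simp only [mem_singleton] at this
        exact ⟨fun _ => hi, fun _ => this⟩
      · have := (mem_erase.mp this).1
        exact ⟨fun hc => absurd hc this, fun hm => absurd hm hi⟩
  rw [h1, Fintype.card_piFinset]
  have h2 : ∀ i : Fin n,
      ((if i ∈ T then ({Fin.last l} : Finset (Fin (l+1))) else univ.erase (Fin.last l))).card
      = if i ∈ T then 1 else l := by
    intro i
    split_ifs
    · exact card_singleton _
    · rw [card_erase_of_mem (mem_univ _), card_univ, Fintype.card_fin]; omega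
  rw [Finset.prod_congr rfl (fun i _ => h2 i), Finset.prod_ite, Finset.prod_const_one, one_mul,
    Finset.prod_const]
  congr 1
  have : univ.filter (fun i => i ∉ T) = Tᶜ := by ext i; simp
  rw [this, card_compl, Fintype.card_fin]

lemma card_exactcard {l n : ℕ} (j : ℕ) :
    (univ.filter (fun c : Fin n → Fin (l+1) => (lcoords c).card = j)).card
      = n.choose j * l ^ (n - j) := by
  rw [Finset.card_eq_sum_card_fiberwise (f := lcoords) (t := powersetCard j univ)
    (fun c hc => mem_powersetCard.mpr ⟨subset_univ _, (mem_filter.mp hc).2⟩)]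
  have h1 : ∀ T ∈ powersetCard j (univ : Finset (Fin n)),
      ((univ.filter (fun c : Fin n → Fin (l+1) => (lcoords c).card = j)).filter
        (fun c => lcoords c = T)).card = l ^ (n - j) := by
    intro T hT
    obtain ⟨-, hcard⟩ := mem_powersetCard.mp hT
    have : (univ.filter (fun c : Fin n → Fin (l+1) => (lcoords c).card = j)).filter
        (fun c => lcoords c = T) = univ.filter (fun c : Fin n → Fin (l+1) => lcoords c = T) := by
      ext c
      simp only [filter_filter, mem_filter, mem_univ, true_and]
      exact ⟨fun h => h.2, fun h => ⟨h ▸ hcard, h⟩⟩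
    rw [this, card_exact, hcard]
  rw [Finset.sum_congr rfl h1, Finset.sum_const, card_powersetCard, card_univ, Fintype.card_fin,
    smul_eq_mul]

lemma card_good (l k n : ℕ) :
    (goodCols l k n).card = ∑ i ∈ Finset.range k, l ^ (n - i) * n.choose i := by
  have := Finset.card_eq_sum_card_fiberwise (s := goodCols l k n)
    (f := fun c => (lcoords c).card) (t := Finset.range k)
    (fun c hc => mem_range.mpr (mem_filter.mp hc).2)
  rw [this]
  refine Finset.sum_congr rfl (fun j hj => ?_)
  have : (goodCols l k n).filter (fun c => (lcoords c).card = j)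
      = univ.filter (fun c : Fin n → Fin (l+1) => (lcoords c).card = j) := by
    ext c
    simp only [goodCols, filter_filter, mem_filter, mem_univ, true_and]
    exact ⟨fun h => h.2, fun h => ⟨h ▸ mem_range.mp hj, h⟩⟩
  rw [this, card_exactcard, mul_comm]

def fiberAt {l n : ℕ} (S : Finset (Fin n → Fin (l+1))) (i : Fin n) (c : Fin n → Fin (l+1)) :
    Finset (Fin (l+1)) :=
  univ.filter (fun v => Function.update c i v ∈ S)

def nv {l n : ℕ} (S : Finset (Fin n → Fin (l+1))) (i : Fin n) (c : Fin n → Fin (l+1)) : ℕ :=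
  ((fiberAt S i c).filter (fun v => v < c i)).card

lemma nv_le {l n : ℕ} (S : Finset (Fin n → Fin (l+1))) (i : Fin n) (c : Fin n → Fin (l+1)) :
    nv S i c ≤ (c i : ℕ) := by
  have := Finset.card_le_card_of_injOn (f := fun v : Fin (l+1) => (v : ℕ))
    (s := (fiberAt S i c).filter (fun v => v < c i)) (t := Finset.range (c i : ℕ))
    (fun v hv => mem_range.mpr ((mem_filter.mp hv).2))
    (fun a _ b _ h => Fin.val_injective h)
  rwa [card_range] at this

def compr {l n : ℕ} (S : Finset (Fin n → Fin (l+1))) (i : Fin n) (c : Fin n → Fin (l+1)) :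
    Fin n → Fin (l+1) :=
  Function.update c i ⟨nv S i c, lt_of_le_of_lt (le_trans (nv_le S i c) (Fin.is_le _))
    (Nat.lt_succ_self l)⟩

lemma compr_ne {l n : ℕ} (S : Finset (Fin n → Fin (l+1))) (i : Fin n) (c : Fin n → Fin (l+1))
    {x : Fin n} (hx : x ≠ i) : compr S i c x = c x :=
  Function.update_of_ne hx _ _

lemma compr_self {l n : ℕ} (S : Finset (Fin n → Fin (l+1))) (i : Fin n)
    (c : Fin n → Fin (l+1)) : (compr S i c i : ℕ) = nv S i c := by
  simp [compr]

lemma fiber_congr {l n : ℕ} (S : Finset (Fin n → Fin (l+1))) (i : Fin n)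
    {c d : Fin n → Fin (l+1)} (h : ∀ x, x ≠ i → c x = d x) : fiberAt S i c = fiberAt S i d := by
  have : ∀ v, Function.update c i v = Function.update d i v := by
    intro v; funext x
    by_cases hx : x = i
    · subst hx; simp
    · rw [Function.update_of_ne hx, Function.update_of_ne hx]; exact h x hx
  unfold fiberAt
  ext v; simp [this v]

lemma mem_fiber_self {l n : ℕ} {S : Finset (Fin n → Fin (l+1))} {i : Fin n}
    {c : Fin n → Fin (l+1)} (hc : c ∈ S) : c i ∈ fiberAt S i c := by
  simp [fiberAt, Function.update_eq_self, hc]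

lemma filter_lt_card_lt {l : ℕ} {F : Finset (Fin (l+1))} {a b : Fin (l+1)} (ha : a ∈ F)
    (h : a < b) : (F.filter (fun v => v < a)).card < (F.filter (fun v => v < b)).card := by
  apply Finset.card_lt_card
  constructor
  · intro v hv
    have := mem_filter.mp hv
    exact mem_filter.mpr ⟨this.1, lt_trans this.2 h⟩
  · intro hsub
    have := mem_filter.mp (hsub (mem_filter.mpr ⟨ha, h⟩))
    exact absurd this.2 (lt_irrefl a)

lemma compr_injOn {l n : ℕ} (S : Finset (Fin n → Fin (l+1))) (i : Fin n) :
    Set.InjOn (compr S i) S := by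
  intro c hc d hd h
  have hoff : ∀ x, x ≠ i → c x = d x := by
    intro x hx
    rw [← compr_ne S i c hx, h, compr_ne S i d hx]
  have hfib : fiberAt S i c = fiberAt S i d := fiber_congr S i hoff
  have hnv : nv S i c = nv S i d := by
    rw [← compr_self S i c, ← compr_self S i d, h]
  have hci : c i = d i := by
    by_contra hne
    rcases lt_or_gt_of_ne hne with hlt | hlt
    · have := filter_lt_card_lt (F := fiberAt S i c) (mem_fiber_self hc) hlt
      rw [show (fiberAt S i c).filter (fun v => v < d i)
            = (fiberAt S i d).filter (fun v => v < d i) by rw [hfib]] at this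
      unfold nv at hnv; omega
    · have := filter_lt_card_lt (F := fiberAt S i d) (mem_fiber_self hd) hlt
      rw [show (fiberAt S i d).filter (fun v => v < c i)
            = (fiberAt S i c).filter (fun v => v < c i) by rw [hfib]] at this
      unfold nv at hnv; omega
  funext x
  by_cases hx : x = i
  · subst hx; exact hci
  · exact hoff x hx

lemma mem_fiberAt {l n : ℕ} {S : Finset (Fin n → Fin (l+1))} {i : Fin n}
    {c : Fin n → Fin (l+1)} {v : Fin (l+1)} : v ∈ fiberAt S i c ↔ Function.update c i v ∈ S := by
  simp [fiberAt]

lemma nv_def {l n : ℕ} (S : Finset (Fin n → Fin (l+1))) (i : Fin n) (c : Fin n → Fin (l+1)) :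
    nv S i c = ((fiberAt S i c).filter (fun v => v < c i)).card := rfl

def wcol {l n : ℕ} (c : Fin n → Fin (l+1)) : ℕ := ∑ x, (c x : ℕ)

def wS {l n : ℕ} (S : Finset (Fin n → Fin (l+1))) : ℕ := ∑ c ∈ S, wcol c

lemma wcol_compr {l n : ℕ} (S : Finset (Fin n → Fin (l+1))) (i : Fin n)
    (c : Fin n → Fin (l+1)) : wcol (compr S i c) + (c i : ℕ) = wcol c + nv S i c := by
  unfold wcol
  rw [← Finset.sum_erase_add univ _ (mem_univ i), ← Finset.sum_erase_add univ
    (fun x => (c x : ℕ)) (mem_univ i)]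
  have : ∀ x ∈ univ.erase i, (compr S i c x : ℕ) = (c x : ℕ) := by
    intro x hx
    rw [compr_ne S i c (mem_erase.mp hx).1]
  rw [Finset.sum_congr rfl this, compr_self]
  omega

lemma nv_lt_of_gap {l n : ℕ} {S : Finset (Fin n → Fin (l+1))} {i : Fin n}
    {c : Fin n → Fin (l+1)} {v : Fin (l+1)} (hv : v < c i)
    (hnot : Function.update c i v ∉ S) : nv S i c < (c i : ℕ) := by
  have hsub := Finset.card_le_card_of_injOn (f := fun w : Fin (l+1) => (w : ℕ))
    (s := (fiberAt S i c).filter (fun w => w < c i))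
    (t := (Finset.range (c i : ℕ)).erase (v : ℕ))
    (fun w hw => by
      obtain ⟨hwf, hwlt⟩ := mem_filter.mp hw
      refine mem_erase.mpr ⟨?_, mem_range.mpr hwlt⟩
      intro hcast
      have : w = v := Fin.val_injective hcast
      subst this
      exact hnot (mem_fiberAt.mp hwf))
    (fun a _ b _ h => Fin.val_injective h)
  rw [card_erase_of_mem (mem_range.mpr hv), card_range] at hsub
  rw [nv_def]
  have : (0 : ℕ) < (c i : ℕ) := lt_of_le_of_lt (Nat.zero_le _) hv
  omega

def IsDown {l n : ℕ} (S : Finset (Fin n → Fin (l+1))) : Prop :=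
  ∀ c ∈ S, ∀ (i : Fin n) (v : Fin (l+1)), v ≤ c i → Function.update c i v ∈ S

lemma wS_compr_lt {l n : ℕ} (S : Finset (Fin n → Fin (l+1))) (hnd : ¬ IsDown S) :
    ∃ i : Fin n, Set.InjOn (compr S i) S → wS (S.image (compr S i)) < wS S := by
  unfold IsDown at hnd
  push_neg at hnd
  obtain ⟨c, hc, i, v, hv, hnot⟩ := hnd
  have hvlt : v < c i := by
    rcases lt_or_eq_of_le hv with h | h
    · exact h
    · exfalso; apply hnot; rw [h]; rw [Function.update_eq_self]; exact hc
  refine ⟨i, fun hinj => ?_⟩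
  rw [wS, Finset.sum_image (fun a ha b hb h => hinj ha hb h)]
  apply Finset.sum_lt_sum
  · intro d _
    have := wcol_compr S i d
    have := nv_le S i d
    omega
  · refine ⟨c, hc, ?_⟩
    have h1 := wcol_compr S i c
    have h2 := nv_lt_of_gap hvlt hnot
    omega

def KfreeS (k : ℕ) {l n : ℕ} (S : Finset (Fin n → Fin (l+1))) : Prop :=
  ∀ r : Fin k → Fin n, Function.Injective r →
    ∃ q : Fin k → Fin (l+1), ∀ c ∈ S, ∃ j, c (r j) ≠ q j

lemma kfree_compr {k l n : ℕ} {S : Finset (Fin n → Fin (l+1))}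
    (hS : KfreeS k S) (i : Fin n) : KfreeS k (S.image (compr S i)) := by
  intro r rinj
  obtain ⟨q, hq⟩ := hS r rinj
  by_cases hi : ∃ j₀, r j₀ = i
  · obtain ⟨j₀, hj₀⟩ := hi
    refine ⟨Function.update q j₀ (Fin.last l), ?_⟩
    intro d hd
    obtain ⟨c, hc, rfl⟩ := Finset.mem_image.mp hd
    by_contra h
    push_neg at h
    have hoff : ∀ j, j ≠ j₀ → c (r j) = q j := by
      intro j hj
      have hrj : r j ≠ i := by
        rw [← hj₀]; intro he; exact hj (rinj he)
      have := h j
      rw [compr_ne S i c hrj, Function.update_of_ne hj] at this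
      exact this
    have hlast : nv S i c = l := by
      have := h j₀
      rw [hj₀] at this
      rw [Function.update_self] at this
      have := congrArg Fin.val this
      rw [compr_self] at this
      simpa using this
    have hqF : q j₀ ∉ fiberAt S i c := by
      intro hmem
      obtain ⟨j, hj⟩ := hq _ (mem_fiberAt.mp hmem)
      by_cases hjj : j = j₀
      · subst hjj
        rw [hj₀, Function.update_self] at hj
        exact hj rfl
      · rw [Function.update_of_ne (by rw [← hj₀]; intro he; exact hjj (rinj he))] at hj
        exact hj (hoff j hjj)
    have hciF : c i ∈ fiberAt S i c := mem_fiber_self hc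
    -- card bounds
    have hFsub : fiberAt S i c ⊆ univ.erase (q j₀) := by
      intro w hw
      exact mem_erase.mpr ⟨fun he => hqF (he ▸ hw), mem_univ _⟩
    have hFle : (fiberAt S i c).card ≤ l := by
      have := Finset.card_le_card hFsub
      rwa [card_erase_of_mem (mem_univ _), card_univ, Fintype.card_fin,
        Nat.add_sub_cancel] at this
    have hnvle : nv S i c ≤ (fiberAt S i c).card - 1 := by
      rw [nv_def]
      have hsub : (fiberAt S i c).filter (fun v => v < c i) ⊆ (fiberAt S i c).erase (c i) := by
        intro w hw
        obtain ⟨h1, h2⟩ := mem_filter.mp hw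
        exact mem_erase.mpr ⟨ne_of_lt h2, h1⟩
      have := Finset.card_le_card hsub
      rwa [card_erase_of_mem hciF] at this
    have hFpos : 1 ≤ (fiberAt S i c).card := Finset.card_pos.mpr ⟨c i, hciF⟩
    omega
  · refine ⟨q, ?_⟩
    intro d hd
    obtain ⟨c, hc, rfl⟩ := Finset.mem_image.mp hd
    obtain ⟨j, hj⟩ := hq c hc
    refine ⟨j, ?_⟩
    rw [compr_ne S i c (fun he => hi ⟨j, he⟩)]
    exact hj

lemma down_mem {l n : ℕ} {S : Finset (Fin n → Fin (l+1))} (hS : IsDown S) :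
    ∀ (t : ℕ) (c d : Fin n → Fin (l+1)), c ∈ S → (∀ x, d x ≤ c x) →
      (univ.filter (fun x => d x ≠ c x)).card ≤ t → d ∈ S := by
  intro t
  induction t with
  | zero =>
    intro c d hc hle h0
    have : univ.filter (fun x => d x ≠ c x) = ∅ := Finset.card_eq_zero.mp (Nat.le_zero.mp h0)
    have hdc : d = c := by
      funext x
      by_contra hx
      exact absurd (this ▸ mem_filter.mpr ⟨mem_univ x, hx⟩) (notMem_empty x)
    exact hdc ▸ hc
  | succ t ih =>
    intro c d hc hle h
    by_cases hdc : d = c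
    · exact hdc ▸ hc
    · have : ∃ x₀, d x₀ ≠ c x₀ := by
        by_contra hx
        push_neg at hx
        exact hdc (funext hx)
      obtain ⟨x₀, hx₀⟩ := this
      set c' := Function.update c x₀ (d x₀) with hc'def
      have hc' : c' ∈ S := hS c hc x₀ (d x₀) (hle x₀)
      refine ih c' d hc' ?_ ?_
      · intro x
        by_cases hx : x = x₀
        · subst hx; rw [hc'def, Function.update_self]
        · rw [hc'def, Function.update_of_ne hx]; exact hle x
      · have hsub : univ.filter (fun x => d x ≠ c' x)
            ⊆ (univ.filter (fun x => d x ≠ c x)).erase x₀ := by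
          intro x hx
          obtain ⟨-, hne⟩ := mem_filter.mp hx
          have hxx : x ≠ x₀ := by
            intro he; subst he
            rw [hc'def, Function.update_self] at hne
            exact hne rfl
          rw [hc'def, Function.update_of_ne hxx] at hne
          exact mem_erase.mpr ⟨hxx, mem_filter.mpr ⟨mem_univ x, hne⟩⟩
        have h1 := Finset.card_le_card hsub
        have h2 : x₀ ∈ univ.filter (fun x => d x ≠ c x) := mem_filter.mpr ⟨mem_univ x₀, hx₀⟩
        rw [card_erase_of_mem h2] at h1
        have := Finset.card_pos.mpr ⟨x₀, h2⟩
        omega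

lemma down_kfree_subset {l k n : ℕ} {S : Finset (Fin n → Fin (l+1))} (hS : IsDown S)
    (hf : KfreeS k S) : S ⊆ goodCols l k n := by
  intro c hc
  rw [goodCols, mem_filter]
  refine ⟨mem_univ c, ?_⟩
  by_contra hbad
  push_neg at hbad
  obtain ⟨T, hTsub, hTcard⟩ := Finset.exists_subset_card_eq hbad
  set r := T.orderEmbOfFin hTcard with hrdef
  obtain ⟨q, hq⟩ := hf r r.injective
  set c' : Fin n → Fin (l+1) := fun x => if h : ∃ j, r j = x then q h.choose else c x with hc'def
  have hrT : ∀ j, (r j : Fin n) ∈ T := fun j => Finset.orderEmbOfFin_mem T hTcard j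
  have hcl : ∀ j, c (r j) = Fin.last l := by
    intro j
    have := hTsub (hrT j)
    rw [lcoords, mem_filter] at this
    exact this.2
  have hc'r : ∀ j, c' (r j) = q j := by
    intro j
    have hex : ∃ j', (r j' : Fin n) = r j := ⟨j, rfl⟩
    rw [hc'def]
    simp only [dif_pos hex]
    congr 1
    exact r.injective hex.choose_spec
  have hle : ∀ x, c' x ≤ c x := by
    intro x
    rw [hc'def]
    by_cases h : ∃ j, (r j : Fin n) = x
    · simp only [dif_pos h]
      have : c x = Fin.last l := by rw [← h.choose_spec]; exact hcl _
      rw [this]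
      exact Fin.le_last _
    · simp only [dif_neg h]; exact le_refl _
  have hc'S : c' ∈ S := down_mem hS _ c c' hc hle le_rfl
  obtain ⟨j, hj⟩ := hq c' hc'S
  exact hj (hc'r j)

lemma kfree_card_le {l k n : ℕ} (S : Finset (Fin n → Fin (l+1))) (hf : KfreeS k S) :
    S.card ≤ (goodCols l k n).card := by
  have H : ∀ w (S : Finset (Fin n → Fin (l+1))), wS S = w → KfreeS k S →
      S.card ≤ (goodCols l k n).card := by
    intro w
    induction w using Nat.strong_induction_on with
    | _ w ih =>
      intro S hw hf
      by_cases hd : IsDown S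
      · exact Finset.card_le_card (down_kfree_subset hd hf)
      · obtain ⟨i, hi⟩ := wS_compr_lt S hd
        have hinj := compr_injOn S i
        have hlt := hi hinj
        have hcard : (S.image (compr S i)).card = S.card := Finset.card_image_of_injOn hinj
        rw [← hcard]
        exact ih _ (hw ▸ hlt) _ rfl (kfree_compr hf i)
  exact H _ S rfl hf

lemma Kgen_col (k l : ℕ) (i : Fin k) (j : Fin ((l+1)^k)) :
    Kgen k l i j = finFunctionFinEquiv.symm j i := rfl

lemma kgen_cols_inj {k l : ℕ} {j₁ j₂ : Fin ((l+1)^k)}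
    (h : ∀ i, Kgen k l i j₁ = Kgen k l i j₂) : j₁ = j₂ := by
  apply finFunctionFinEquiv.symm.injective
  funext i
  rw [← Kgen_col, ← Kgen_col]
  exact h i

lemma kgen_cols_surj {k l : ℕ} (q : Fin k → Fin (l+1)) :
    ∃ j, ∀ i, Kgen k l i j = q i := by
  refine ⟨finFunctionFinEquiv q, fun i => ?_⟩
  rw [Kgen_col, Equiv.symm_apply_apply]

lemma kfree_matrix {k l n m : ℕ} (M : Fin n → Fin m → Fin (l+1))
    (S : Finset (Fin n → Fin (l+1))) (hcols : ∀ j, (fun i => M i j) ∈ S)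
    (hS : KfreeS k S) : ¬ IsSubmatrix (Kgen k l) M := by
  rintro ⟨r, s, rinj, sinj, hms⟩
  obtain ⟨q, hq⟩ := hS r rinj
  obtain ⟨jj, hjj⟩ := kgen_cols_surj q
  obtain ⟨j, hj⟩ := hq (fun i => M i (s jj)) (hcols _)
  exact hj ((hms j jj).trans (hjj j))

lemma kfree_good {l k n : ℕ} : KfreeS k (goodCols l k n) := by
  intro r rinj
  refine ⟨fun _ => Fin.last l, ?_⟩
  intro c hc
  by_contra h
  push_neg at h
  have hsub : (univ : Finset (Fin k)).image r ⊆ lcoords c := by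
    intro x hx
    obtain ⟨j, -, rfl⟩ := Finset.mem_image.mp hx
    exact mem_filter.mpr ⟨mem_univ _, h j⟩
  have h1 := Finset.card_le_card hsub
  rw [Finset.card_image_of_injective _ rinj, card_univ, Fintype.card_fin] at h1
  have h2 := (mem_filter.mp hc).2
  omega

end ForbProof

open Finset in
theorem stmt_0 (l k n : ℕ) (hl : 1 ≤ l) (hk : 1 ≤ k) (hn : k - 1 ≤ n) :
    IsGreatest
      {m | ∃ M : Fin n → Fin m → Fin (l + 1), Simple' M ∧ ¬ IsSubmatrix (Kgen k l) M}
      (∑ i ∈ Finset.range k, l ^ (n - i) * n.choose i) := by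
  constructor
  · -- membership
    rw [← card_good l k n]
    set S₀ := goodCols l k n with hS₀
    refine ⟨fun i j => ((S₀.equivFin.symm j : S₀) : Fin n → Fin (l+1)) i, ?_, ?_⟩
    · intro j₁ j₂ h
      apply S₀.equivFin.symm.injective
      exact Subtype.coe_injective (funext h)
    · apply kfree_matrix _ S₀ _ kfree_good
      intro j
      exact (S₀.equivFin.symm j).2
  · -- upper bound
    rintro m ⟨M, hsimp, hnsub⟩
    set S := (univ : Finset (Fin m)).image (fun j => fun i => M i j) with hSdef
    have hinj : Function.Injective (fun j => fun i => M i j) := by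
      intro j₁ j₂ h
      exact hsimp j₁ j₂ (fun i => congrFun h i)
    have hcard : S.card = m := by
      rw [hSdef, Finset.card_image_of_injective _ hinj, card_univ, Fintype.card_fin]
    have hfree : KfreeS k S := by
      by_contra hnf
      unfold KfreeS at hnf
      push_neg at hnf
      obtain ⟨r, rinj, hsur⟩ := hnf
      have hch : ∀ jj : Fin ((l+1)^k), ∃ j : Fin m, ∀ i, M (r i) j = Kgen k l i jj := by
        intro jj
        obtain ⟨c, hcS, hc⟩ := hsur (fun i => Kgen k l i jj)
        obtain ⟨j, -, hj⟩ := Finset.mem_image.mp hcS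
        refine ⟨j, fun i => ?_⟩
        have := congrFun hj (r i)
        rw [this]
        exact hc i
      choose s hs using hch
      apply hnsub
      refine ⟨r, s, rinj, ?_, fun i jj => hs jj i⟩
      intro jj₁ jj₂ h
      apply kgen_cols_inj (l := l)
      intro i
      rw [← hs jj₁ i, ← hs jj₂ i, h]
    calc m = S.card := hcard.symm
      _ ≤ (goodCols l k n).card := kfree_card_le S hfree
      _ = _ := card_good l k n
end

section
/- The n-row matrix whose columns are all n-columns with at most k−1 entries equal to l (entries from {0,…,l}) contains no K_k^l as a submatrix; consequently forb(n, K_k^l; l) ≥ ∑_{i=0}^{k-1} l^{n−i} · binomial(n, i). -/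
/-!
The last column of `K_k^l` is constantly `l`, so a copy of `K_k^l` inside `M` would produce a
column of `M` with at least `k` entries equal to `l`. The columns with exactly `i` entries equal to
`l` are obtained by choosing those `i` positions and filling the other `n - i` with one of the `l`
remaining symbols, which gives the count `l ^ (n - i) * n.choose i`.
-/

open Finset

theorem Nat.pow_sub_one_div_pow_mod {b k i : ℕ} (hb : 0 < b) (hi : i < k) :
    (b ^ k - 1) / b ^ i % b = b - 1 := by
  obtain ⟨d, rfl⟩ : ∃ d, k = i + (d + 1) := ⟨k - i - 1, by omega⟩
  have hbi : 0 < b ^ i := Nat.pow_pos hb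
  have hbd : 0 < b ^ d := Nat.pow_pos hb
  -- every base-`b` digit of `b ^ k - 1` is `b - 1`
  have hsplit : b ^ (i + (d + 1)) - 1 = (b ^ i - 1) + b ^ i * ((b - 1) + b * (b ^ d - 1)) := by
    have : b ^ (i + (d + 1)) = b ^ i * (b * b ^ d) := by ring
    rw [this]
    zify [Nat.one_le_iff_ne_zero.2 hb.ne', hbi, hbd, Nat.mul_pos hbi (Nat.mul_pos hb hbd)]
    ring
  rw [hsplit, Nat.add_mul_div_left _ _ hbi, Nat.div_eq_of_lt (by omega), zero_add,
    Nat.add_mul_mod_self_left, Nat.mod_eq_of_lt (by omega)]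

theorem Kgen_apply_pow_sub_one (k l : ℕ) (i : Fin k) :
    Kgen k l i ⟨(l + 1) ^ k - 1, Nat.sub_lt (Nat.pow_pos l.succ_pos) one_pos⟩ = Fin.last l :=
  Fin.ext (Nat.pow_sub_one_div_pow_mod l.succ_pos i.isLt)

theorem not_isSubmatrix_of_card_filter_lt {α : Type*} {k c n m : ℕ} {F : Fin k → Fin c → α}
    {M : Fin n → Fin m → α} (p : α → Prop) [DecidablePred p] {j₀ : Fin c}
    (hF : ∀ i, p (F i j₀)) (hM : ∀ j, #{i | p (M i j)} < k) : ¬ IsSubmatrix F M := by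
  rintro ⟨r, s, hr, -, hrs⟩
  have hle : #(univ.map ⟨r, hr⟩) ≤ #{i | p (M i (s j₀))} := card_le_card fun x hx => by
    obtain ⟨i, -, rfl⟩ := mem_map.1 hx
    simpa [hrs] using hF i
  rw [card_map, card_univ, Fintype.card_fin] at hle
  exact (hM (s j₀)).not_ge hle

theorem card_filter_card_filter_eq {ι β : Type*} [Fintype ι] [DecidableEq ι] [Fintype β]
    (p : β → Prop) [DecidablePred p] (i : ℕ) :
    #{C : ι → β | #{j | p (C j)} = i} =
      (Fintype.card ι).choose i * #{b | p b} ^ i * #{b | ¬ p b} ^ (Fintype.card ι - i) := by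
  have hmaps : (({C : ι → β | #{j | p (C j)} = i} : Finset _) : Set (ι → β)).MapsTo
      (fun C => ({j | p (C j)} : Finset ι)) ↑(powersetCard i (univ : Finset ι)) := fun C hC => by
    simpa using hC
  have hfiber : ∀ T ∈ powersetCard i univ,
      ({C ∈ {C : ι → β | #{j | p (C j)} = i} | ({j | p (C j)} : Finset ι) = T} : Finset _) =
        Fintype.piFinset fun j =>
          if j ∈ T then ({b | p b} : Finset β) else ({b | ¬ p b} : Finset β) := by
    intro T hT
    rw [mem_powersetCard_univ] at hT
    ext C
    simp only [mem_filter, mem_univ, true_and, Fintype.mem_piFinset, Finset.ext_iff]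
    refine ⟨fun ⟨_, h⟩ j => ?_, fun h => ?_⟩
    · by_cases hj : j ∈ T <;> simpa [hj] using h j
    · have hCT : ∀ j, p (C j) ↔ j ∈ T := fun j => by by_cases hj : j ∈ T <;> simpa [hj] using h j
      exact ⟨by rw [← hT]; congr 1; ext j; simpa using hCT j, hCT⟩
  rw [card_eq_sum_card_fiberwise hmaps, sum_congr rfl fun T hT => by rw [hfiber T hT],
    sum_congr rfl fun T hT => ?_, sum_const, card_powersetCard, card_univ, smul_eq_mul, mul_assoc]
  rw [mem_powersetCard_univ] at hT
  rw [Fintype.card_piFinset, prod_apply_ite, prod_const, prod_const, filter_mem_eq_inter,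
    univ_inter, filter_notMem_eq_sdiff, ← compl_eq_univ_sdiff, card_compl, hT]

theorem card_filter_card_filter_lt {ι β : Type*} [Fintype ι] [DecidableEq ι] [Fintype β]
    (p : β → Prop) [DecidablePred p] (k : ℕ) :
    #{C : ι → β | #{j | p (C j)} < k} = ∑ i ∈ range k,
      (Fintype.card ι).choose i * #{b | p b} ^ i * #{b | ¬ p b} ^ (Fintype.card ι - i) := by
  rw [card_eq_sum_card_fiberwise (f := fun C => #{j | p (C j)}) (t := range k)
    fun C hC => by simpa using hC]
  refine sum_congr rfl fun i hi => ?_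
  rw [filter_filter, ← card_filter_card_filter_eq]
  congr 1
  exact filter_congr fun C _ => ⟨And.right, fun h => ⟨h ▸ mem_range.1 hi, h⟩⟩

theorem card_filter_val_eq_last (l : ℕ) : #{b : Fin (l + 1) | (b : ℕ) = l} = 1 := by
  rw [card_eq_one]
  exact ⟨Fin.last l, by ext b; simp [Fin.ext_iff]⟩

theorem card_filter_val_ne_last (l : ℕ) : #{b : Fin (l + 1) | ¬ (b : ℕ) = l} = l := by
  have := card_filter_add_card_filter_not (s := univ) fun b : Fin (l + 1) => (b : ℕ) = l
  rw [card_filter_val_eq_last, card_univ, Fintype.card_fin] at this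
  omega

theorem card_filter_card_filter_val_eq_le {n l k : ℕ} (hk : 1 ≤ k) :
    #{C : Fin n → Fin (l + 1) | #{j | (C j : ℕ) = l} ≤ k - 1} =
      ∑ i ∈ range k, l ^ (n - i) * n.choose i := by
  have hlt : ∀ C : Fin n → Fin (l + 1), #{j | (C j : ℕ) = l} ≤ k - 1 ↔ #{j | (C j : ℕ) = l} < k :=
    fun C => by omega
  simp only [hlt]
  rw [card_filter_card_filter_lt (fun b : Fin (l + 1) => (b : ℕ) = l)]
  simp only [card_filter_val_eq_last, card_filter_val_ne_last, Fintype.card_fin, one_pow, mul_one,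
    mul_comm]

theorem exists_simple_of_card_eq {α : Type*} {n m : ℕ} (S : Finset (Fin n → α)) (h : #S = m) :
    ∃ M : Fin n → Fin m → α, Simple' M ∧ ∀ j, (fun i => M i j) ∈ S :=
  let e := (S.equivFinOfCardEq h).symm
  ⟨fun i j => (e j : Fin n → α) i, fun _ _ hj => e.injective (Subtype.ext (funext hj)),
    fun j => (e j).2⟩

theorem stmt_1_general (l k n : ℕ) (hk : 1 ≤ k) :
    (∀ (m : ℕ) (M : Fin n → Fin m → Fin (l + 1)),
      (∀ j, (Finset.univ.filter fun i => (M i j : ℕ) = l).card ≤ k - 1) →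
      ¬ IsSubmatrix (Kgen k l) M) ∧
    ∃ M : Fin n → Fin (∑ i ∈ Finset.range k, l ^ (n - i) * n.choose i) → Fin (l + 1),
      Simple' M ∧
      (∀ j, (Finset.univ.filter fun i => (M i j : ℕ) = l).card ≤ k - 1) ∧
      ¬ IsSubmatrix (Kgen k l) M := by
  have hfree : ∀ (m : ℕ) (M : Fin n → Fin m → Fin (l + 1)),
      (∀ j, #{i | (M i j : ℕ) = l} ≤ k - 1) → ¬ IsSubmatrix (Kgen k l) M :=
    fun _ _ hM => not_isSubmatrix_of_card_filter_lt (fun x : Fin (l + 1) => (x : ℕ) = l)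
      (fun i => by rw [Kgen_apply_pow_sub_one, Fin.val_last]) fun j => by have := hM j; omega
  obtain ⟨M, hsimple, hcols⟩ := exists_simple_of_card_eq _ (card_filter_card_filter_val_eq_le hk)
  have hcount : ∀ j, #{i | (M i j : ℕ) = l} ≤ k - 1 := fun j => (mem_filter.1 (hcols j)).2
  exact ⟨hfree, M, hsimple, hcount, hfree _ M hcount⟩

theorem stmt_1 (l k n : ℕ) (hl : 1 ≤ l) (hk : 1 ≤ k) :
    (∀ (m : ℕ) (M : Fin n → Fin m → Fin (l + 1)),
      (∀ j, (Finset.univ.filter fun i => (M i j : ℕ) = l).card ≤ k - 1) →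
      ¬ IsSubmatrix (Kgen k l) M) ∧
    ∃ M : Fin n → Fin (∑ i ∈ Finset.range k, l ^ (n - i) * n.choose i) → Fin (l + 1),
      Simple' M ∧
      (∀ j, (Finset.univ.filter fun i => (M i j : ℕ) = l).card ≤ k - 1) ∧
      ¬ IsSubmatrix (Kgen k l) M :=
  stmt_1_general l k n hk
end

section
/- Let F be a family of 0-1 matrices such that no matrix in F has two equal rows. Then either sat(n, F) is constant for all sufficiently large n, or sat(n, F) ≥ n + 1 for every n. -/
/-- `M` is saturated with respect to a family `𝓕` of forbidden matrices. -/
def FamSaturated (𝓕 : Set (Σ k : ℕ, Σ c : ℕ, Fin k → Fin c → Bool)) {n m : ℕ}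
    (M : Fin n → Fin m → Bool) : Prop :=
  Simple' M ∧ (∀ F ∈ 𝓕, ¬ IsSubmatrix F.2.2 M) ∧
    ∀ C : Fin n → Bool, ¬ IsCol M C → ∃ F ∈ 𝓕, IsSubmatrix F.2.2 (addCol M C)

/-- `sat(n, 𝓕)`: the minimum size of an `𝓕`-saturated `n`-row matrix. -/
noncomputable def famSat (𝓕 : Set (Σ k : ℕ, Σ c : ℕ, Fin k → Fin c → Bool)) (n : ℕ) : ℕ :=
  sInf {m | ∃ M : Fin n → Fin m → Bool, FamSaturated 𝓕 M}

section Helpers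

lemma addCol_lt {n m : ℕ} (M : Fin n → Fin m → Bool) (C : Fin n → Bool) (i : Fin n)
    {j : Fin (m+1)} (h : (j : ℕ) < m) : addCol M C i j = M i ⟨j, h⟩ := by
  simp [addCol, h]

lemma addCol_ge {n m : ℕ} (M : Fin n → Fin m → Bool) (C : Fin n → Bool) (i : Fin n)
    {j : Fin (m+1)} (h : ¬ (j : ℕ) < m) : addCol M C i j = C i := by
  simp [addCol, h]

/-- If every row of `A` occurs as a row of `B` (same column count), and `F` has
distinct rows, then `F ⊑ A → F ⊑ B`. -/
lemma rowSub {k c N N' M : ℕ} {F : Fin k → Fin c → Bool}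
    (hF : ∀ i₁ i₂ : Fin k, (∀ j, F i₁ j = F i₂ j) → i₁ = i₂)
    {A : Fin N → Fin M → Bool} {B : Fin N' → Fin M → Bool}
    (h : ∀ i, ∃ i', ∀ j, A i j = B i' j) :
    IsSubmatrix F A → IsSubmatrix F B := by
  rintro ⟨r, s, hr, hs, hrs⟩
  choose g hg using h
  refine ⟨fun i => g (r i), s, ?_, hs, ?_⟩
  · intro a b hab
    have hab' : g (r a) = g (r b) := hab
    apply hF
    intro j
    rw [← hrs a j, ← hrs b j, hg (r a) (s j), hg (r b) (s j), hab']
  · intro i j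
    rw [← hg (r i) (s j), hrs]

lemma simple_card_le {n m : ℕ} {M : Fin n → Fin m → Bool} (hM : Simple' M) :
    m ≤ 2 ^ n := by
  have : Function.Injective (fun j (i : Fin n) => M i j) := by
    intro j₁ j₂ h
    exact hM j₁ j₂ (fun i => congrFun h i)
  simpa [Fintype.card_fun] using Fintype.card_le_of_injective _ this

lemma simple_addCol {n m : ℕ} {M : Fin n → Fin m → Bool} {C : Fin n → Bool}
    (hM : Simple' M) (hC : ¬ IsCol M C) : Simple' (addCol M C) := by
  intro j₁ j₂ h
  rcases lt_or_ge (j₁ : ℕ) m with h1 | h1 <;> rcases lt_or_ge (j₂ : ℕ) m with h2 | h2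
  · have := hM ⟨j₁, h1⟩ ⟨j₂, h2⟩ (fun i => by
      have := h i; rwa [addCol_lt M C i h1, addCol_lt M C i h2] at this)
    exact Fin.ext (by simpa using congrArg Fin.val this)
  · exact absurd ⟨⟨j₁, h1⟩, fun i => by
      have := h i
      rw [addCol_lt M C i h1, addCol_ge M C i (by omega)] at this; exact this⟩ hC
  · exact absurd ⟨⟨j₂, h2⟩, fun i => by
      have := h i
      rw [addCol_lt M C i h2, addCol_ge M C i (by omega)] at this; exact this.symm⟩ hC
  · exact Fin.ext (by omega)
/-- If every forbidden matrix has at least one column, a saturated matrix exists. -/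
lemma sat_exists (𝓕 : Set (Σ k : ℕ, Σ c : ℕ, Fin k → Fin c → Bool))
    (hc : ∀ F ∈ 𝓕, 0 < F.2.1) (n : ℕ) :
    {m | ∃ M : Fin n → Fin m → Bool, FamSaturated 𝓕 M}.Nonempty := by
  set T : Set ℕ := {m | ∃ M : Fin n → Fin m → Bool, Simple' M ∧ ∀ F ∈ 𝓕, ¬ IsSubmatrix F.2.2 M}
    with hT
  have h0 : 0 ∈ T := by
    refine ⟨fun i j => false, fun j₁ j₂ _ => j₁.elim0, ?_⟩
    rintro F hF ⟨r, s, hr, hs, hrs⟩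
    exact (s ⟨0, hc F hF⟩).elim0
  have hbdd : BddAbove T := by
    refine ⟨2 ^ n, ?_⟩
    rintro m ⟨M, hM, -⟩
    exact simple_card_le hM
  set m := sSup T with hm
  obtain ⟨M, hM, hMfree⟩ : m ∈ T := Nat.sSup_mem ⟨0, h0⟩ hbdd
  refine ⟨m, M, hM, hMfree, ?_⟩
  intro C hC
  by_contra hno
  push_neg at hno
  have : m + 1 ∈ T := ⟨addCol M C, simple_addCol hM hC, hno⟩
  have := le_csSup hbdd this
  omega
/-- Rows at which some pair of vectors in `S` differ exactly. -/
def usedF {n : ℕ} (S : Finset (Fin n → Bool)) : Finset (Fin n) :=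
  Finset.univ.filter fun r => ∃ x ∈ S, ∃ y ∈ S, x ≠ y ∧ ∀ i, i ≠ r → x i = y i

lemma used_lt {n : ℕ} (S : Finset (Fin n → Bool)) (hS : S.Nonempty) :
    (usedF S).card < S.card := by
  induction S using Finset.strongInduction with
  | _ S ih =>
  rcases Finset.eq_empty_or_nonempty (usedF S) with he | ⟨r, hr⟩
  · rw [he]; simpa using Finset.card_pos.mpr hS
  · simp only [usedF, Finset.mem_filter] at hr
    obtain ⟨-, x, hx, y, hy, hxy, hagree⟩ := hr
    have hdiff : x r ≠ y r := by
      intro hcon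
      apply hxy
      funext i
      by_cases hi : i = r
      · rw [hi]; exact hcon
      · exact hagree i hi
    set S₀ := S.filter (fun v => v r = false) with hS₀
    set S₁ := S.filter (fun v => v r = true) with hS₁
    have hmem : ∀ v ∈ S, v r = false → v ∈ S₀ := fun v hv h =>
      Finset.mem_filter.mpr ⟨hv, h⟩
    have hmem1 : ∀ v ∈ S, v r = true → v ∈ S₁ := fun v hv h =>
      Finset.mem_filter.mpr ⟨hv, h⟩
    have h0ne : S₀.Nonempty := by
      rcases Bool.eq_false_or_eq_true (x r) with h | h
      · refine ⟨y, hmem y hy ?_⟩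
        cases hyr : y r
        · rfl
        · exact absurd (h.trans hyr.symm) hdiff
      · exact ⟨x, hmem x hx h⟩
    have h1ne : S₁.Nonempty := by
      rcases Bool.eq_false_or_eq_true (x r) with h | h
      · exact ⟨x, hmem1 x hx h⟩
      · refine ⟨y, hmem1 y hy ?_⟩
        cases hyr : y r
        · exact absurd (h.trans hyr.symm) hdiff
        · rfl
    have hsub0 : S₀ ⊂ S := by
      refine ⟨Finset.filter_subset _ _, fun hss => ?_⟩
      obtain ⟨v, hv⟩ := h1ne
      have h1 := (Finset.mem_filter.mp hv).2
      have h2 := (Finset.mem_filter.mp (hss (Finset.mem_filter.mp hv).1)).2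
      simp [h1] at h2
    have hsub1 : S₁ ⊂ S := by
      refine ⟨Finset.filter_subset _ _, fun hss => ?_⟩
      obtain ⟨v, hv⟩ := h0ne
      have h1 := (Finset.mem_filter.mp hv).2
      have h2 := (Finset.mem_filter.mp (hss (Finset.mem_filter.mp hv).1)).2
      simp [h1] at h2
    have hcards : S₀.card + S₁.card = S.card := by
      have h₁ : S₁ = S.filter (fun v => ¬ (v r = false)) := by
        apply Finset.filter_congr
        intro v _
        simp
      rw [hS₀, h₁]
      exact Finset.card_filter_add_card_filter_not (s := S) (fun v => v r = false)
    have hunion : usedF S ⊆ usedF S₀ ∪ usedF S₁ ∪ {r} := by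
      intro q hq
      simp only [usedF, Finset.mem_filter, Finset.mem_univ, true_and] at hq
      obtain ⟨u, hu, v, hv, huv, hag⟩ := hq
      by_cases hqr : q = r
      · simp [hqr]
      · have huvr : u r = v r := hag r (Ne.symm hqr)
        rcases Bool.eq_false_or_eq_true (u r) with h | h
        · have h1 : u ∈ S₁ := hmem1 u hu h
          have h2 : v ∈ S₁ := hmem1 v hv (huvr ▸ h)
          simp only [Finset.mem_union]
          left; right
          simp only [usedF, Finset.mem_filter, Finset.mem_univ, true_and]
          exact ⟨u, h1, v, h2, huv, hag⟩
        · have h1 : u ∈ S₀ := hmem u hu h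
          have h2 : v ∈ S₀ := hmem v hv (huvr ▸ h)
          simp only [Finset.mem_union]
          left; left
          simp only [usedF, Finset.mem_filter, Finset.mem_univ, true_and]
          exact ⟨u, h1, v, h2, huv, hag⟩
    have ih0 := ih S₀ hsub0 h0ne
    have ih1 := ih S₁ hsub1 h1ne
    have hcard := Finset.card_le_card hunion
    have hu1 := Finset.card_union_le (usedF S₀ ∪ usedF S₁) {r}
    have hu2 := Finset.card_union_le (usedF S₀) (usedF S₁)
    simp only [Finset.card_singleton] at hu1
    omega
/-- Row `r` is "used": some pair of distinct columns differs exactly at `r`. -/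
def UsedRow {n m : ℕ} (M : Fin n → Fin m → Bool) (r : Fin n) : Prop :=
  ∃ j₁ j₂ : Fin m, j₁ ≠ j₂ ∧ ∀ i, i ≠ r → M i j₁ = M i j₂

lemma exists_unused {n m : ℕ} {M : Fin n → Fin m → Bool} (hM : Simple' M)
    (hmn : m ≤ n) (hn : 1 ≤ n) : ∃ r, ¬ UsedRow M r := by
  classical
  rcases Nat.eq_zero_or_pos m with hm | hm
  · subst hm
    exact ⟨⟨0, hn⟩, fun ⟨j₁, _, _, _⟩ => j₁.elim0⟩
  · set S : Finset (Fin n → Bool) := Finset.image (fun j i => M i j) Finset.univ with hS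
    have hcardS : S.card = m := by
      rw [hS, Finset.card_image_of_injective]
      · simp
      · intro j₁ j₂ h
        exact hM j₁ j₂ (fun i => congrFun h i)
    have hSne : S.Nonempty := by
      refine ⟨fun i => M i ⟨0, hm⟩, ?_⟩
      exact Finset.mem_image.mpr ⟨⟨0, hm⟩, Finset.mem_univ _, rfl⟩
    have hsub : Finset.univ.filter (UsedRow M) ⊆ usedF S := by
      intro r hr
      obtain ⟨-, j₁, j₂, hj, hag⟩ := Finset.mem_filter.mp hr
      simp only [usedF, Finset.mem_filter, Finset.mem_univ, true_and]
      refine ⟨fun i => M i j₁, Finset.mem_image.mpr ⟨j₁, Finset.mem_univ _, rfl⟩,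
        fun i => M i j₂, Finset.mem_image.mpr ⟨j₂, Finset.mem_univ _, rfl⟩, ?_, hag⟩
      intro hcon
      exact hj (hM j₁ j₂ (fun i => congrFun hcon i))
    have hlt : (Finset.univ.filter (UsedRow M)).card < n := by
      calc (Finset.univ.filter (UsedRow M)).card ≤ (usedF S).card := Finset.card_le_card hsub
        _ < S.card := used_lt S hSne
        _ = m := hcardS
        _ ≤ n := hmn
    by_contra hall
    push_neg at hall
    have : (Finset.univ : Finset (Fin n)) ⊆ Finset.univ.filter (UsedRow M) := by
      intro r _
      exact Finset.mem_filter.mpr ⟨Finset.mem_univ _, hall r⟩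
    have := Finset.card_le_card this
    simp at this
    omega
/-- Up lemma: duplicating an unused row of a saturated matrix keeps it saturated. -/
lemma up_lemma {𝓕 : Set (Σ k : ℕ, Σ c : ℕ, Fin k → Fin c → Bool)}
    (hrows : ∀ F ∈ 𝓕, ∀ i₁ i₂ : Fin F.1, (∀ j, F.2.2 i₁ j = F.2.2 i₂ j) → i₁ = i₂)
    {n m : ℕ} {M : Fin n → Fin m → Bool} (hsat : FamSaturated 𝓕 M)
    {r : Fin n} (hr : ¬ UsedRow M r) :
    ∃ M' : Fin (n+1) → Fin m → Bool, FamSaturated 𝓕 M' ∧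
      ∃ i₁ i₂ : Fin (n+1), i₁ ≠ i₂ ∧ ∀ j, M' i₁ j = M' i₂ j := by
  classical
  obtain ⟨hM, hfree, hadd⟩ := hsat
  set d : Fin (n+1) → Fin n := fun i => if h : (i : ℕ) < n then ⟨i, h⟩ else r with hd
  set M' : Fin (n+1) → Fin m → Bool := fun i j => M (d i) j with hM'
  have hdcast : ∀ i : Fin n, d (Fin.castSucc i) = i := by
    intro i
    simp only [hd]
    rw [dif_pos (by simp)]
    exact Fin.ext (by simp)
  have hdlast : d (Fin.last n) = r := by
    simp only [hd]
    rw [dif_neg (by simp)]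
  have hlastcast : ∀ i : Fin (n+1), ¬ ((i : ℕ) < n) → i = Fin.last n := by
    intro i h
    have hi := i.isLt
    apply Fin.ext
    simp only [Fin.val_last]
    omega
  refine ⟨M', ⟨?_, ?_, ?_⟩, Fin.castSucc r, Fin.last n, ?_, ?_⟩
  · -- simple
    intro j₁ j₂ h
    exact hM j₁ j₂ (fun i => by
      have := h (Fin.castSucc i)
      simpa only [hM', hdcast] using this)
  · -- free
    intro F hF hcon
    exact hfree F hF (rowSub (hrows F hF) (fun i => ⟨d i, fun j => rfl⟩) hcon)
  · -- saturated
    intro C' hC'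
    set C : Fin n → Bool := fun i => C' (Fin.castSucc i) with hC
    by_cases heq : C' (Fin.castSucc r) = C' (Fin.last n)
    · have hkey : ∀ i : Fin (n+1), C' i = C (d i) := by
        intro i
        by_cases h : (i : ℕ) < n
        · simp only [hd, hC]
          rw [dif_pos h]
          congr 1
        · rw [hlastcast i h, hdlast]
          exact heq.symm
      have hCcol : ¬ IsCol M C := by
        rintro ⟨j, hj⟩
        exact hC' ⟨j, fun i => by rw [show M' i j = M (d i) j from rfl, hj (d i), ← hkey i]⟩
      obtain ⟨F, hF, hsub⟩ := hadd C hCcol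
      refine ⟨F, hF, rowSub (hrows F hF) ?_ hsub⟩
      intro i
      refine ⟨Fin.castSucc i, fun j => ?_⟩
      by_cases hj : (j : ℕ) < m
      · rw [addCol_lt M C i hj, addCol_lt M' C' _ hj]
        simp only [hM', hdcast]
      · rw [addCol_ge M C i hj, addCol_ge M' C' _ hj]
    · set Cb : Fin n → Bool := Function.update C r (C' (Fin.last n)) with hCb
      have hnotboth : ¬ (IsCol M C ∧ IsCol M Cb) := by
        rintro ⟨⟨ja, hja⟩, ⟨jb, hjb⟩⟩
        apply hr
        refine ⟨ja, jb, ?_, ?_⟩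
        · intro hcon
          apply heq
          have h1 : C r = C' (Fin.castSucc r) := rfl
          have h2 : Cb r = C' (Fin.last n) := by simp [hCb]
          rw [← h1, ← h2, ← hja r, ← hjb r, hcon]
        · intro i hi
          rw [hja i, hjb i, hCb]
          simp [Function.update_of_ne hi]
      rcases not_and_or.mp hnotboth with hstar | hstar
      · obtain ⟨F, hF, hsub⟩ := hadd C hstar
        refine ⟨F, hF, rowSub (hrows F hF) ?_ hsub⟩
        intro i
        refine ⟨Fin.castSucc i, fun j => ?_⟩
        by_cases hj : (j : ℕ) < m
        · rw [addCol_lt M C i hj, addCol_lt M' C' _ hj]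
          simp only [hM', hdcast]
        · rw [addCol_ge M C i hj, addCol_ge M' C' _ hj]
      · obtain ⟨F, hF, hsub⟩ := hadd Cb hstar
        refine ⟨F, hF, rowSub (hrows F hF) ?_ hsub⟩
        intro i
        by_cases hir : i = r
        · refine ⟨Fin.last n, fun j => ?_⟩
          by_cases hj : (j : ℕ) < m
          · rw [addCol_lt M Cb i hj, addCol_lt M' C' _ hj]
            simp only [hM', hdlast, hir]
          · rw [addCol_ge M Cb i hj, addCol_ge M' C' _ hj, hir, hCb]
            simp
        · refine ⟨Fin.castSucc i, fun j => ?_⟩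
          by_cases hj : (j : ℕ) < m
          · rw [addCol_lt M Cb i hj, addCol_lt M' C' _ hj]
            simp only [hM', hdcast]
          · rw [addCol_ge M Cb i hj, addCol_ge M' C' _ hj, hCb]
            simp [Function.update_of_ne hir, hC]
  · -- distinct indices
    intro hcon
    have := congrArg Fin.val hcon
    simp at this
    have := r.isLt
    omega
  · -- equal rows
    intro j
    simp only [hM', hdcast, hdlast]
/-- Down lemma: deleting one of two equal rows of a saturated matrix keeps it saturated. -/
lemma down_lemma {𝓕 : Set (Σ k : ℕ, Σ c : ℕ, Fin k → Fin c → Bool)}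
    (hrows : ∀ F ∈ 𝓕, ∀ i₁ i₂ : Fin F.1, (∀ j, F.2.2 i₁ j = F.2.2 i₂ j) → i₁ = i₂)
    {n m : ℕ} {M' : Fin (n+1) → Fin m → Bool} (hsat : FamSaturated 𝓕 M')
    {r₁ r₂ : Fin (n+1)} (hne : r₁ ≠ r₂) (heq : ∀ j, M' r₁ j = M' r₂ j) :
    ∃ M : Fin n → Fin m → Bool, FamSaturated 𝓕 M := by
  classical
  obtain ⟨hM, hfree, hadd⟩ := hsat
  set e : Fin n → Fin (n+1) := r₂.succAbove with he
  have hinj : Function.Injective e := Fin.succAbove_right_injective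
  have hner₂ : ∀ i, e i ≠ r₂ := fun i => Fin.succAbove_ne r₂ i
  obtain ⟨i₁, hi₁⟩ : ∃ i, e i = r₁ := Fin.exists_succAbove_eq hne
  set M : Fin n → Fin m → Bool := fun i j => M' (e i) j with hMdef
  have hcover : ∀ i' : Fin (n+1), ∃ i : Fin n, ∀ j, M' i' j = M i j := by
    intro i'
    by_cases h : i' = r₂
    · exact ⟨i₁, fun j => by rw [h, ← heq j, ← hi₁]⟩
    · obtain ⟨i, hi⟩ := Fin.exists_succAbove_eq h
      exact ⟨i, fun j => by rw [← hi]⟩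
  refine ⟨M, ?_, ?_, ?_⟩
  · intro j₁ j₂ h
    apply hM j₁ j₂
    intro i'
    obtain ⟨i, hi⟩ := hcover i'
    rw [hi j₁, hi j₂]
    exact h i
  · intro F hF hcon
    refine hfree F hF ?_
    obtain ⟨r, s, hr, hs, hrs⟩ := hcon
    exact ⟨fun i => e (r i), s, fun a b hab => hr (hinj hab), hs, hrs⟩
  · intro C hC
    set Cp : Fin (n+1) → Bool := Function.extend e C (fun _ => C i₁) with hCp
    have hCe : ∀ i, Cp (e i) = C i := fun i => hinj.extend_apply _ _ i
    have hCr₂ : Cp r₂ = C i₁ := by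
      apply Function.extend_apply'
      rintro ⟨i, hi⟩
      exact hner₂ i hi
    have hCpcol : ¬ IsCol M' Cp := by
      rintro ⟨j, hj⟩
      exact hC ⟨j, fun i => by show M' (e i) j = C i; rw [hj (e i), hCe]⟩
    obtain ⟨F, hF, hsub⟩ := hadd Cp hCpcol
    refine ⟨F, hF, rowSub (hrows F hF) ?_ hsub⟩
    intro i'
    by_cases h : i' = r₂
    · refine ⟨i₁, fun j => ?_⟩
      by_cases hj : (j : ℕ) < m
      · rw [addCol_lt M' Cp _ hj, addCol_lt M C _ hj, h, ← heq, ← hi₁]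
      · rw [addCol_ge M' Cp _ hj, addCol_ge M C _ hj, h, hCr₂]
    · obtain ⟨i, hi⟩ := Fin.exists_succAbove_eq h
      refine ⟨i, fun j => ?_⟩
      by_cases hj : (j : ℕ) < m
      · rw [addCol_lt M' Cp _ hj, addCol_lt M C _ hj, ← hi]
      · rw [addCol_ge M' Cp _ hj, addCol_ge M C _ hj, ← hi, hCe]
lemma dup_rows {N m : ℕ} (h : 2 ^ m < N) (M : Fin N → Fin m → Bool) :
    ∃ r₁ r₂ : Fin N, r₁ ≠ r₂ ∧ ∀ j, M r₁ j = M r₂ j := by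
  have hcard : Fintype.card (Fin m → Bool) < Fintype.card (Fin N) := by
    simpa [Fintype.card_fun] using h
  obtain ⟨a, b, hab, hfab⟩ := Fintype.exists_ne_map_eq_of_card_lt M hcard
  exact ⟨a, b, hab, fun j => congrFun hfab j⟩

end Helpers
theorem stmt_3 (𝓕 : Set (Σ k : ℕ, Σ c : ℕ, Fin k → Fin c → Bool))
    (hrows : ∀ F ∈ 𝓕, ∀ i₁ i₂ : Fin F.1,
      (∀ j, F.2.2 i₁ j = F.2.2 i₂ j) → i₁ = i₂) :
    (∃ c N : ℕ, ∀ n, N ≤ n → famSat 𝓕 n = c) ∨ (∀ n, n + 1 ≤ famSat 𝓕 n) := by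
  classical
  by_cases hdeg : ∃ F ∈ 𝓕, F.2.1 = 0
  · -- some forbidden matrix has no column: no saturated matrices for large n
    obtain ⟨F, hF, hc⟩ := hdeg
    left
    refine ⟨0, F.1, fun n hn => ?_⟩
    have hempty : {m | ∃ M : Fin n → Fin m → Bool, FamSaturated 𝓕 M} = ∅ := by
      ext m
      simp only [Set.mem_setOf_eq, Set.mem_empty_iff_false, iff_false]
      rintro ⟨M, hM⟩
      apply hM.2.1 F hF
      refine ⟨Fin.castLE hn, fun j => absurd j.isLt (by omega),
        Fin.castLE_injective hn, fun a b _ => absurd a.isLt (by omega),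
        fun i j => absurd j.isLt (by omega)⟩
    rw [famSat, hempty, Nat.sInf_empty]
  · push_neg at hdeg
    have hc : ∀ F ∈ 𝓕, 0 < F.2.1 := fun F hF => Nat.pos_of_ne_zero (hdeg F hF)
    have hne := sat_exists 𝓕 hc
    by_cases hbig : ∀ n, n + 1 ≤ famSat 𝓕 n
    · exact Or.inr hbig
    push_neg at hbig
    obtain ⟨n₀, hn₀⟩ := hbig
    replace hn₀ : famSat 𝓕 n₀ ≤ n₀ := by omega
    rcases Nat.eq_zero_or_pos n₀ with h0 | hpos
    · -- n₀ = 0 : then famSat is identically 0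
      subst h0
      have hz : famSat 𝓕 0 = 0 := by omega
      have hmem := Nat.sInf_mem (hne 0)
      rw [show sInf {m | ∃ M : Fin 0 → Fin m → Bool, FamSaturated 𝓕 M} = famSat 𝓕 0 from rfl,
        hz] at hmem
      obtain ⟨M₀, hM₀⟩ := hmem
      have hcol : ¬ IsCol M₀ (fun i => i.elim0) := by rintro ⟨j, -⟩; exact j.elim0
      obtain ⟨F, hF, r, s, hr, hs, hrs⟩ := hM₀.2.2 _ hcol
      have hk0 : F.1 = 0 := by
        by_contra hk
        exact (r ⟨0, Nat.pos_of_ne_zero hk⟩).elim0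
      have hc1 : F.2.1 ≤ 1 := by
        simpa using Fintype.card_le_of_injective s hs
      left
      refine ⟨0, 0, fun n _ => ?_⟩
      have hmem0 : 0 ∈ {m | ∃ M : Fin n → Fin m → Bool, FamSaturated 𝓕 M} := by
        refine ⟨fun i j => j.elim0, fun j₁ j₂ _ => j₁.elim0, ?_, ?_⟩
        · rintro F' hF' ⟨r', s', -, -, -⟩
          exact (s' ⟨0, hc F' hF'⟩).elim0
        · intro C _
          refine ⟨F, hF, fun i => absurd i.isLt (by omega), fun j => ⟨0, Nat.zero_lt_one⟩,
            fun a b _ => absurd a.isLt (by omega),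
            fun a b _ => Fin.ext (by have := a.isLt; have := b.isLt; omega),
            fun i j => absurd i.isLt (by omega)⟩
      have hle0 : famSat 𝓕 n ≤ 0 := Nat.sInf_le hmem0
      omega
    · -- n₀ ≥ 1 : eventually constant
      left
      set m₀ := famSat 𝓕 n₀ with hm₀
      -- step: if famSat n ≤ n and n ≥ 1 then famSat (n+1) ≤ famSat n
      have hstep : ∀ n, 1 ≤ n → famSat 𝓕 n ≤ n → famSat 𝓕 (n+1) ≤ famSat 𝓕 n := by
        intro n h1 hle
        obtain ⟨M, hM⟩ := Nat.sInf_mem (hne n)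
        obtain ⟨r, hr⟩ := exists_unused hM.1 hle h1
        obtain ⟨M', hM', -⟩ := up_lemma hrows hM hr
        exact Nat.sInf_le ⟨M', hM'⟩
      -- upper bound for all n ≥ n₀
      have hub : ∀ j : ℕ, famSat 𝓕 (n₀ + j) ≤ m₀ := by
        intro j
        induction j with
        | zero => exact le_refl _
        | succ j ih =>
          have h1 : 1 ≤ n₀ + j := by omega
          have h2 : famSat 𝓕 (n₀ + j) ≤ n₀ + j := le_trans ih (by omega)
          have := hstep (n₀ + j) h1 h2
          calc famSat 𝓕 (n₀ + (j+1)) = famSat 𝓕 ((n₀ + j) + 1) := by ring_nf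
            _ ≤ famSat 𝓕 (n₀ + j) := hstep (n₀ + j) h1 h2
            _ ≤ m₀ := ih
      have hub' : ∀ n, n₀ ≤ n → famSat 𝓕 n ≤ m₀ := by
        intro n hn
        obtain ⟨j, rfl⟩ := Nat.exists_eq_add_of_le hn
        exact hub j
      -- lower step for large n
      have hlow : ∀ n, n₀ ≤ n → 2 ^ m₀ ≤ n → famSat 𝓕 n ≤ famSat 𝓕 (n+1) := by
        intro n hn hpow
        obtain ⟨M'', hM''⟩ := Nat.sInf_mem (hne (n+1))
        have hm' : famSat 𝓕 (n+1) ≤ m₀ := hub' (n+1) (by omega)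
        have hlt : 2 ^ famSat 𝓕 (n+1) < n + 1 :=
          lt_of_le_of_lt (Nat.pow_le_pow_right (by norm_num) hm') (by omega)
        obtain ⟨r₁, r₂, hr12, heq12⟩ := dup_rows hlt M''
        obtain ⟨M, hM⟩ := down_lemma hrows hM'' hr12 heq12
        exact Nat.sInf_le ⟨M, hM⟩
      set N := max n₀ (2 ^ m₀) with hN
      refine ⟨famSat 𝓕 N, N, fun n hn => ?_⟩
      induction n, hn using Nat.le_induction with
      | base => rfl
      | succ n hn ih =>
        have h1 : n₀ ≤ n := le_trans (le_max_left _ _) hn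
        have h2 : 2 ^ m₀ ≤ n := le_trans (le_max_right _ _) hn
        have hle : famSat 𝓕 n ≤ n := le_trans (hub' n h1) (le_trans hn₀ h1)
        have hup := hstep n (by omega) hle
        have hdn := hlow n h1 h2
        omega
end

section
/- For every k ≥ 1 and every n ≥ k, each row of any monotonically K_k-saturated simple n-row 0-1 matrix contains at least 2^{k−1} − 1 ones and at least 2^{k−1} − 1 zeros. -/
/-- `F` is a submatrix of `M` using only rows from `A`. -/
def SubmatrixRows {α : Type*} {k c n m : ℕ} (A : Finset (Fin n)) (F : Fin k → Fin c → α)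
    (M : Fin n → Fin m → α) : Prop :=
  ∃ r : Fin k → Fin n, Function.Injective r ∧ (∀ i, r i ∈ A) ∧
    ∃ s : Fin c → Fin m, Function.Injective s ∧ ∀ i j, M (r i) (s j) = F i j

/-!
Fix a row `i` and a value `b`. If changing the entry `!b` in row `i` of a column to `b` always
yields another column of `M`, this is an injection from the `!b`-entries of row `i` into its
`b`-entries, so at least half of the `m ≥ 2^k - 1` columns have `b` in row `i`. Otherwise such a
changed column `C` is missing from `M`. Away from row `i`, `C` agrees with a column of `M`, so the
new copy of `K_k` in `[M, C]` must use row `i`; the corresponding row of `K_k` has `2^(k-1)`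
entries `b`, at most one of which lies in `C`.
-/

open Finset Function

section

variable {α : Type*} {k c n m : ℕ}

@[simp]
lemma addCol_castSucc (M : Fin n → Fin m → α) (C : Fin n → α) (i : Fin n) (j : Fin m) :
    addCol M C i j.castSucc = M i j := by
  simp [addCol]

@[simp]
lemma addCol_last (M : Fin n → Fin m → α) (C : Fin n → α) (i : Fin n) :
    addCol M C i (Fin.last m) = C i := by
  simp [addCol]

lemma card_filter_addCol_le [DecidableEq α] (M : Fin n → Fin m → α) (C : Fin n → α)
    (i : Fin n) (b : α) : #{j | addCol M C i j = b} ≤ #{j | M i j = b} + 1 := by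
  rw [Fin.univ_castSuccEmb, filter_cons]
  split_ifs <;> simp [filter_map, comp_def]

lemma card_filter_le_of_injective {X Y : Type*} [Fintype X] [Fintype Y] [DecidableEq α]
    {f : X → α} {g : Y → α} {s : X → Y} (hs : Injective s) (h : ∀ x, g (s x) = f x) (b : α) :
    #{x | f x = b} ≤ #{y | g y = b} :=
  card_le_card_of_injOn s (fun x hx => by simp_all) hs.injOn

lemma card_filter_eq_add_card_filter_eq_not {X : Type*} [Fintype X] (f : X → Bool) (b : Bool) :
    #{x | f x = b} + #{x | f x = !b} = Fintype.card X := by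
  rw [← card_univ, ← card_filter_add_card_filter_not (s := univ) (p := fun x => f x = b)]
  cases b <;> simp

lemma submatrixRows_iff_of_simple {A : Finset (Fin n)} {F : Fin k → Fin c → α}
    {M : Fin n → Fin m → α} (hF : Simple' F) :
    SubmatrixRows A F M ↔ ∃ r : Fin k → Fin n, Injective r ∧ (∀ a, r a ∈ A) ∧
      ∀ j, ∃ j', ∀ a, M (r a) j' = F a j := by
  constructor
  · rintro ⟨r, hr, hrA, s, -, hs⟩
    exact ⟨r, hr, hrA, fun j => ⟨s j, fun a => hs a j⟩⟩
  · rintro ⟨r, hr, hrA, hcol⟩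
    choose s hs using hcol
    refine ⟨r, hr, hrA, s, fun j₁ j₂ h => hF j₁ j₂ fun a => ?_, fun a j => hs j a⟩
    rw [← hs j₁ a, ← hs j₂ a, h]

lemma SubmatrixRows.of_addCol {A : Finset (Fin n)} {F : Fin k → Fin c → α}
    {M : Fin n → Fin m → α} {C : Fin n → α} (hF : Simple' F) {r : Fin k → Fin n}
    (hr : Injective r) (hrA : ∀ a, r a ∈ A) {s : Fin c → Fin (m + 1)}
    (hs : ∀ a j, addCol M C (r a) (s j) = F a j) {j₀ : Fin m}
    (hj₀ : ∀ a, M (r a) j₀ = C (r a)) : SubmatrixRows A F M := by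
  refine (submatrixRows_iff_of_simple hF).2 ⟨r, hr, hrA, fun j => ?_⟩
  rcases (s j).eq_castSucc_or_eq_last with ⟨j', hj'⟩ | hlast
  · exact ⟨j', fun a => by simpa [hj'] using hs a j⟩
  · exact ⟨j₀, fun a => by simpa [hlast, hj₀] using hs a j⟩

lemma kfull_simple : Simple' (Kfull k) := by
  intro j₁ j₂ h
  refine Fin.ext (Nat.eq_of_testBit_eq fun i => ?_)
  by_cases hi : i < k
  · exact h ⟨i, hi⟩
  · have hk : 2 ^ k ≤ 2 ^ i := Nat.pow_le_pow_right two_pos (not_lt.1 hi)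
    rw [Nat.testBit_lt_two_pow (j₁.2.trans_le hk), Nat.testBit_lt_two_pow (j₂.2.trans_le hk)]

lemma card_filter_kfull_eq (a : Fin k) (b : Bool) :
    #{j | Kfull k a j = b} = 2 ^ (k - 1) := by
  set flip : Fin (2 ^ k) → Fin (2 ^ k) := fun j =>
    ⟨j ^^^ 2 ^ (a : ℕ), Nat.xor_lt_two_pow j.2 (Nat.pow_lt_pow_right one_lt_two a.2)⟩
  have hflip : Involutive flip := fun j => Fin.ext (by simp [flip])
  have hswap : #{j | Kfull k a j = b} = #{j | Kfull k a j = !b} := by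
    refine card_equiv hflip.toPerm fun j => ?_
    simp only [mem_filter, mem_univ, true_and]
    simp [flip, Kfull, Nat.testBit_xor]
  have hsum := card_filter_eq_add_card_filter_eq_not (Kfull k a) b
  have hk : 2 ^ k = 2 * 2 ^ (k - 1) := by
    rw [← pow_succ', Nat.sub_add_cancel (Nat.one_le_of_lt a.2)]
  simp only [Fintype.card_fin] at hsum
  omega

def IsMonotonicallySaturated (F : Fin k → Fin c → α) (M : Fin n → Fin m → α) : Prop :=
  ∀ C : Fin n → α, ¬ IsCol M C →
    ∃ A : Finset (Fin n), ¬ SubmatrixRows A F M ∧ SubmatrixRows A F (addCol M C)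

lemma card_filter_le_of_isCol_update [DecidableEq α] {M : Fin n → Fin m → α} (hM : Simple' M)
    {i : Fin n} {b b' : α} (hflip : ∀ j, M i j = b' → IsCol M (update (swap M j) i b)) :
    #{j | M i j = b'} ≤ #{j | M i j = b} := by
  choose! f hf using hflip
  refine card_le_card_of_injOn f (fun j hj => ?_) fun j₁ hj₁ j₂ hj₂ h => hM _ _ fun x => ?_
  · simp only [coe_filter, mem_univ, true_and, Set.mem_ofPred_eq] at hj ⊢
    simpa using hf j hj i
  · simp only [coe_filter, mem_univ, true_and, Set.mem_ofPred_eq] at hj₁ hj₂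
    by_cases hx : x = i
    · rw [hx, hj₁, hj₂]
    · have h₁ := hf j₁ hj₁ x
      rw [h] at h₁
      simpa [hx] using h₁.symm.trans (hf j₂ hj₂ x)

lemma IsMonotonicallySaturated.exists_row_embedding {F : Fin k → Fin c → α}
    {M : Fin n → Fin m → α} (hF : Simple' F) (hsat : IsMonotonicallySaturated F M)
    {i : Fin n} {j : Fin m} {x : α} (hmiss : ¬ IsCol M (update (swap M j) i x)) :
    ∃ a : Fin k, ∃ s : Fin c → Fin (m + 1), Injective s ∧
      ∀ j', addCol M (update (swap M j) i x) i (s j') = F a j' := by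
  obtain ⟨A, hfree, r, hr, hrA, s, hs, hent⟩ := hsat _ hmiss
  by_cases hi : ∃ a, r a = i
  · obtain ⟨a, rfl⟩ := hi
    exact ⟨a, s, hs, hent a⟩
  · push Not at hi
    exact (hfree (.of_addCol hF hr hrA hent (j₀ := j) fun a => by simp [hi a])).elim

lemma IsMonotonicallySaturated.two_pow_le_succ {M : Fin n → Fin m → Bool}
    (hsat : IsMonotonicallySaturated (Kfull k) M) (hn : k ≤ n) : 2 ^ k ≤ m + 1 := by
  by_cases hall : ∀ C, IsCol M C
  · have hsurj : Surjective (swap M) := fun C => (hall C).imp fun j hj => funext hj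
    have := Fintype.card_le_of_surjective _ hsurj
    simp only [Fintype.card_fun, Fintype.card_bool, Fintype.card_fin] at this
    exact (Nat.pow_le_pow_right two_pos hn).trans (this.trans m.le_succ)
  · push Not at hall
    obtain ⟨C, hC⟩ := hall
    obtain ⟨-, -, -, -, -, s, hs, -⟩ := hsat C hC
    simpa using Fintype.card_le_of_injective s hs

end

theorem stmt_4_general (k n m : ℕ) (hn : k ≤ n) (M : Fin n → Fin m → Bool)
    (hM : Simple' M)
    (hsat : ∀ C : Fin n → Bool, ¬ IsCol M C →
      ∃ A : Finset (Fin n), ¬ SubmatrixRows A (Kfull k) M ∧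
        SubmatrixRows A (Kfull k) (addCol M C)) :
    ∀ i : Fin n,
      2 ^ (k - 1) - 1 ≤ (Finset.univ.filter fun j => M i j = true).card ∧
      2 ^ (k - 1) - 1 ≤ (Finset.univ.filter fun j => M i j = false).card := by
  have hsat' : IsMonotonicallySaturated (Kfull k) M := hsat
  suffices h : ∀ i b, 2 ^ (k - 1) - 1 ≤ #{j | M i j = b} from fun i => ⟨h i true, h i false⟩
  intro i b
  by_cases hflip : ∀ j, M i j = !b → IsCol M (update (swap M j) i b)
  · have hle := card_filter_le_of_isCol_update hM hflip
    have hsum := card_filter_eq_add_card_filter_eq_not (M i) b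
    have hm := hsat'.two_pow_le_succ hn
    have hk : 2 * 2 ^ (k - 1) ≤ 2 ^ k + 1 := by
      cases k <;> simp [pow_succ']
    simp only [Fintype.card_fin] at hsum
    omega
  · push Not at hflip
    obtain ⟨j, -, hmiss⟩ := hflip
    obtain ⟨a, s, hs, hrow⟩ := hsat'.exists_row_embedding kfull_simple hmiss
    have hKrow := card_filter_le_of_injective hs hrow b
    rw [card_filter_kfull_eq] at hKrow
    have := card_filter_addCol_le M (update (swap M j) i b) i b
    omega

theorem stmt_4 (k n m : ℕ) (hk : 1 ≤ k) (hn : k ≤ n) (M : Fin n → Fin m → Bool)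
    (hM : Simple' M)
    (hsat : ∀ C : Fin n → Bool, ¬ IsCol M C →
      ∃ A : Finset (Fin n), ¬ SubmatrixRows A (Kfull k) M ∧
        SubmatrixRows A (Kfull k) (addCol M C)) :
    ∀ i : Fin n,
      2 ^ (k - 1) - 1 ≤ (Finset.univ.filter fun j => M i j = true).card ∧
      2 ^ (k - 1) - 1 ≤ (Finset.univ.filter fun j => M i j = false).card :=
  stmt_4_general k n m hn M hM hsat
end

section
/- For every n ≥ 1, the minimum number of columns of a K_2-saturated simple n-row 0-1 matrix equals n + 1; that is, sat(n, K_2) = forb(n, K_2) = n + 1. -/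
/-!
Read columns as subsets of the rows. XOR-ing every column with one fixed column preserves
simplicity, `K₂`-freeness and saturation, so we may assume the empty column is present. Then two
rows lying in a common column are not shattered exactly when their row supports (the sets of
columns containing them) are nested.

In a `K₂`-free matrix every nonempty column is therefore the up-set `{x | supp i ⊆ supp x}` of
its row `i` of smallest support, which leaves room for at most `n + 1` columns. In a saturated
matrix, conversely, every up-set is a column, and distinct rows have distinct supports (otherwise
the up-set of one of them with the other removed could be added without creating `K₂`): this
gives `n` distinct nonempty columns besides the empty one.
-/

open Finset

section Patterns

variable {n m : ℕ}

def HasPattern (M : Fin n → Fin m → Bool) (a b : Fin n) (p q : Bool) : Prop :=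
  ∃ j, M a j = p ∧ M b j = q

def Shatters (M : Fin n → Fin m → Bool) (a b : Fin n) : Prop :=
  ∀ p q, HasPattern M a b p q

lemma hasPattern_comm {M : Fin n → Fin m → Bool} {a b : Fin n} {p q : Bool} :
    HasPattern M a b p q ↔ HasPattern M b a q p :=
  exists_congr fun _ => and_comm

lemma Kfull_two_exists_col : ∀ p q : Bool, ∃ j, Kfull 2 0 j = p ∧ Kfull 2 1 j = q := by
  decide

lemma Kfull_two_col_injective :
    ∀ j₁ j₂, Kfull 2 0 j₁ = Kfull 2 0 j₂ → Kfull 2 1 j₁ = Kfull 2 1 j₂ → j₁ = j₂ := by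
  decide

lemma isSubmatrix_Kfull_two_iff {M : Fin n → Fin m → Bool} :
    IsSubmatrix (Kfull 2) M ↔ ∃ a b, a ≠ b ∧ Shatters M a b := by
  constructor
  · rintro ⟨r, s, hr, -, h⟩
    refine ⟨r 0, r 1, hr.ne (by decide), fun p q => ?_⟩
    obtain ⟨j, hj⟩ := Kfull_two_exists_col p q
    exact ⟨s j, by rw [h, h]; exact hj⟩
  · rintro ⟨a, b, hab, hsh⟩
    choose s hs using fun j => hsh (Kfull 2 0 j) (Kfull 2 1 j)
    refine ⟨![a, b], s, ?_, fun j₁ j₂ h => ?_, fun i j => ?_⟩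
    · intro x y hxy
      fin_cases x <;> fin_cases y <;> simp_all [eq_comm]
    · exact Kfull_two_col_injective j₁ j₂ (by rw [← (hs j₁).1, ← (hs j₂).1, h])
        (by rw [← (hs j₁).2, ← (hs j₂).2, h])
    · fin_cases i
      exacts [(hs j).1, (hs j).2]

lemma hasPattern_addCol_iff {M : Fin n → Fin m → Bool} {C : Fin n → Bool} {a b : Fin n}
    {p q : Bool} :
    HasPattern (addCol M C) a b p q ↔ HasPattern M a b p q ∨ (C a = p ∧ C b = q) := by
  simp [HasPattern, Fin.exists_fin_succ', addCol]

end Patterns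

section XorRows

variable {n m : ℕ}

def xorRows (B : Fin n → Bool) (M : Fin n → Fin m → Bool) : Fin n → Fin m → Bool :=
  fun i j => xor (B i) (M i j)

variable {B : Fin n → Bool} {M : Fin n → Fin m → Bool}

lemma hasPattern_xorRows_iff {a b : Fin n} {p q : Bool} :
    HasPattern (xorRows B M) a b p q ↔ HasPattern M a b (xor (B a) p) (xor (B b) q) := by
  simp only [HasPattern, xorRows]
  exact exists_congr fun j => by
    cases B a <;> cases B b <;> cases M a j <;> cases M b j <;> cases p <;> cases q <;> decide

lemma shatters_xorRows_iff {a b : Fin n} : Shatters (xorRows B M) a b ↔ Shatters M a b := by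
  refine ⟨fun h p q => ?_, fun h p q => hasPattern_xorRows_iff.2 (h _ _)⟩
  simpa using hasPattern_xorRows_iff.1 (h (xor (B a) p) (xor (B b) q))

lemma isSubmatrix_Kfull_two_xorRows_iff :
    IsSubmatrix (Kfull 2) (xorRows B M) ↔ IsSubmatrix (Kfull 2) M := by
  simp only [isSubmatrix_Kfull_two_iff, shatters_xorRows_iff]

lemma Simple'.xorRows (hM : Simple' M) (B : Fin n → Bool) : Simple' (xorRows B M) :=
  fun j₁ j₂ h => hM j₁ j₂ fun i => by simpa [_root_.xorRows] using h i

lemma isCol_xorRows_iff {C : Fin n → Bool} :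
    IsCol (xorRows B M) C ↔ IsCol M fun i => xor (B i) (C i) := by
  simp only [IsCol, xorRows]
  exact exists_congr fun j => forall_congr' fun i => by
    cases B i <;> cases M i j <;> cases C i <;> decide

lemma xorRows_addCol (C : Fin n → Bool) :
    xorRows B (addCol M C) = addCol (xorRows B M) fun i => xor (B i) (C i) := by
  funext i j
  by_cases h : (j : ℕ) < m <;> simp [xorRows, addCol, h]

lemma Saturated.xorRows (hM : Saturated (Kfull 2) M) (B : Fin n → Bool) :
    Saturated (Kfull 2) (xorRows B M) := by
  refine ⟨hM.1.xorRows B, isSubmatrix_Kfull_two_xorRows_iff.not.2 hM.2.1, fun C hC => ?_⟩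
  have h := hM.2.2 _ (isCol_xorRows_iff.not.1 hC)
  rw [← isSubmatrix_Kfull_two_xorRows_iff (B := B), xorRows_addCol] at h
  simpa using h

lemma isCol_xorRows_col_self (M : Fin n → Fin m → Bool) (j : Fin m) :
    IsCol (xorRows (fun i => M i j) M) fun _ => false :=
  ⟨j, fun _ => Bool.xor_self _⟩

end XorRows

section RowOrder

variable {n m : ℕ} {M : Fin n → Fin m → Bool}

def rowSupport (M : Fin n → Fin m → Bool) (x : Fin n) : Finset (Fin m) :=
  {j | M x j = true}

def upSet (M : Fin n → Fin m → Bool) (i : Fin n) : Fin n → Bool :=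
  fun x => decide (rowSupport M i ⊆ rowSupport M x)

@[simp]
lemma mem_rowSupport {x : Fin n} {j : Fin m} : j ∈ rowSupport M x ↔ M x j = true := by
  simp [rowSupport]

lemma rowSupport_subset_iff {a b : Fin n} :
    rowSupport M a ⊆ rowSupport M b ↔ ¬ HasPattern M a b true false := by
  simp [subset_iff, HasPattern]

lemma isCol_iff_mem_image {C : Fin n → Bool} :
    IsCol M C ↔ C ∈ univ.image fun j i => M i j := by
  simp [IsCol, funext_iff]

lemma Simple'.card_image (hM : Simple' M) : #(univ.image fun j i => M i j) = m := by
  rw [card_image_of_injective _ fun j₁ j₂ h => hM j₁ j₂ (congrFun h), card_univ,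
    Fintype.card_fin]

end RowOrder

section Forb

variable {n m : ℕ} {M : Fin n → Fin m → Bool}

lemma rowSupport_subset_total (hfree : ¬ IsSubmatrix (Kfull 2) M)
    (h0 : IsCol M fun _ => false) {a b : Fin n} (h11 : HasPattern M a b true true) :
    rowSupport M a ⊆ rowSupport M b ∨ rowSupport M b ⊆ rowSupport M a := by
  obtain rfl | hab := eq_or_ne a b
  · exact Or.inl subset_rfl
  rw [rowSupport_subset_iff, rowSupport_subset_iff, hasPattern_comm (a := b)]
  by_contra! h
  obtain ⟨j₀, hj₀⟩ := h0
  refine hfree (isSubmatrix_Kfull_two_iff.2 ⟨a, b, hab, ?_⟩)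
  rintro (_ | _) (_ | _)
  exacts [⟨j₀, hj₀ a, hj₀ b⟩, h.2, h.1, h11]

lemma exists_col_eq_upSet (hfree : ¬ IsSubmatrix (Kfull 2) M)
    (h0 : IsCol M fun _ => false) {j : Fin m} (hj : ∃ i, M i j = true) :
    ∃ i, (fun x => M x j) = upSet M i := by
  obtain ⟨i, hi, hmin⟩ := exists_min_image ({x | M x j = true} : Finset (Fin n))
    (fun x => #(rowSupport M x)) (by simpa [Finset.Nonempty] using hj)
  simp only [mem_filter, mem_univ, true_and] at hi hmin
  refine ⟨i, funext fun y => Bool.eq_iff_iff.2 ?_⟩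
  rw [upSet, decide_eq_true_iff]
  refine ⟨fun hy => ?_, fun h => mem_rowSupport.1 (h (mem_rowSupport.2 hi))⟩
  obtain h | h := rowSupport_subset_total hfree h0 ⟨j, hi, hy⟩
  · exact h
  · exact (eq_of_subset_of_card_le h (hmin y hy)).ge

lemma card_le_succ_of_isCol_zero (hM : Simple' M) (hfree : ¬ IsSubmatrix (Kfull 2) M)
    (h0 : IsCol M fun _ => false) : m ≤ n + 1 := by
  classical
  calc m = #(univ.image fun j i => M i j) := hM.card_image.symm
    _ ≤ #(insert (fun _ => false) (univ.image (upSet M))) := card_le_card ?_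
    _ ≤ #(univ.image (upSet M)) + 1 := card_insert_le _ _
    _ ≤ n + 1 := by gcongr; exact card_image_le.trans (by simp)
  intro C hC
  obtain ⟨j, -, rfl⟩ := mem_image.1 hC
  by_cases hj : ∃ i, M i j = true
  · obtain ⟨i, hi⟩ := exists_col_eq_upSet hfree h0 hj
    exact mem_insert_of_mem (mem_image.2 ⟨i, mem_univ _, hi.symm⟩)
  · simp only [not_exists, Bool.not_eq_true] at hj
    exact mem_insert.2 (Or.inl (funext hj))

lemma le_succ_of_simple_of_not_isSubmatrix (hM : Simple' M)
    (hfree : ¬ IsSubmatrix (Kfull 2) M) : m ≤ n + 1 := by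
  rcases Nat.eq_zero_or_pos m with rfl | hm
  · omega
  · exact card_le_succ_of_isCol_zero (hM.xorRows _)
      (by rwa [isSubmatrix_Kfull_two_xorRows_iff]) (isCol_xorRows_col_self M ⟨0, hm⟩)

end Forb

section Sat

variable {n m : ℕ} {M : Fin n → Fin m → Bool}

lemma Saturated.exists_missing_pattern (hM : Saturated (Kfull 2) M) {C : Fin n → Bool}
    (hC : ¬ IsCol M C) :
    ∃ a b, a ≠ b ∧ ∀ p q, HasPattern M a b p q ↔ (p, q) ≠ (C a, C b) := by
  obtain ⟨a, b, hab, hsh⟩ := isSubmatrix_Kfull_two_iff.1 (hM.2.2 C hC)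
  obtain ⟨p₀, q₀, hpq₀⟩ : ∃ p q, ¬ HasPattern M a b p q := by
    by_contra! h
    exact hM.2.1 (isSubmatrix_Kfull_two_iff.2 ⟨a, b, hab, h⟩)
  obtain ⟨rfl, rfl⟩ := (hasPattern_addCol_iff.1 (hsh p₀ q₀)).resolve_left hpq₀
  refine ⟨a, b, hab, fun p q => ⟨?_, fun hne => ?_⟩⟩
  · rintro hpq heq
    simp only [Prod.mk.injEq] at heq
    exact hpq₀ (heq.1 ▸ heq.2 ▸ hpq)
  · exact (hasPattern_addCol_iff.1 (hsh p q)).resolve_right fun h => hne (by rw [h.1, h.2])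

lemma Saturated.exists_missing_pattern_true_false (hM : Saturated (Kfull 2) M)
    (h0 : IsCol M fun _ => false) {C : Fin n → Bool} (hC : ¬ IsCol M C)
    (hC11 : ∀ a b, a ≠ b → C a = true → C b = true → HasPattern M a b true true) :
    ∃ a b, C a = true ∧ C b = false ∧
      ∀ p q, HasPattern M a b p q ↔ (p, q) ≠ (true, false) := by
  obtain ⟨j₀, hj₀⟩ := h0
  obtain ⟨a, b, hab, hpat⟩ := hM.exists_missing_pattern hC
  cases ha : C a <;> cases hb : C b <;> simp only [ha, hb] at hpat
  · exact ((hpat false false).1 ⟨j₀, hj₀ a, hj₀ b⟩ rfl).elim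
  · refine ⟨b, a, hb, ha, fun p q => ?_⟩
    rw [hasPattern_comm, hpat]
    simp [and_comm]
  · exact ⟨a, b, ha, hb, hpat⟩
  · exact ((hpat true true).1 (hC11 a b hab ha hb) rfl).elim

lemma Saturated.exists_eq_true (hM : Saturated (Kfull 2) M) (h0 : IsCol M fun _ => false)
    (i : Fin n) : ∃ j, M i j = true := by
  by_cases hC : IsCol M fun x => decide (x = i)
  · obtain ⟨j, hj⟩ := hC
    exact ⟨j, by simpa using hj i⟩
  · obtain ⟨a, b, ha, -, hpat⟩ := hM.exists_missing_pattern_true_false h0 hC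
      fun a b hab ha hb => by simp_all
    obtain ⟨j, hj, -⟩ := (hpat true true).2 (by simp)
    rw [decide_eq_true_iff] at ha
    exact ⟨j, ha ▸ hj⟩

lemma Saturated.hasPattern_true_true (hM : Saturated (Kfull 2) M)
    (h0 : IsCol M fun _ => false) {i a b : Fin n} (ha : rowSupport M i ⊆ rowSupport M a)
    (hb : rowSupport M i ⊆ rowSupport M b) : HasPattern M a b true true := by
  obtain ⟨j, hj⟩ := hM.exists_eq_true h0 i
  rw [← mem_rowSupport] at hj
  exact ⟨j, mem_rowSupport.1 (ha hj), mem_rowSupport.1 (hb hj)⟩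

lemma Saturated.isCol_upSet (hM : Saturated (Kfull 2) M) (h0 : IsCol M fun _ => false)
    (i : Fin n) : IsCol M (upSet M i) := by
  by_contra hC
  obtain ⟨a, b, ha, hb, hpat⟩ := hM.exists_missing_pattern_true_false h0 hC
    fun a b _ ha hb => hM.hasPattern_true_true h0 (of_decide_eq_true ha) (of_decide_eq_true hb)
  have hab : rowSupport M a ⊆ rowSupport M b :=
    rowSupport_subset_iff.2 fun h => (hpat true false).1 h rfl
  exact of_decide_eq_false hb ((of_decide_eq_true ha).trans hab)

lemma Saturated.rowSupport_injective (hM : Saturated (Kfull 2) M)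
    (h0 : IsCol M fun _ => false) : Function.Injective (rowSupport M) := by
  intro i b hib
  by_contra hne
  let C : Fin n → Bool := fun x => decide (rowSupport M i ⊆ rowSupport M x ∧ x ≠ b)
  by_cases hC : IsCol M C
  · obtain ⟨j, hj⟩ := hC
    have hi : j ∈ rowSupport M i := mem_rowSupport.2 (by simpa [C, hne] using hj i)
    have hb : M b j = true := mem_rowSupport.1 (hib ▸ hi)
    simp [C, hj b] at hb
  · obtain ⟨a, b', ha, hb', hpat⟩ := hM.exists_missing_pattern_true_false h0 hC
      fun _ _ _ ha hb => hM.hasPattern_true_true h0 (of_decide_eq_true ha).1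
        (of_decide_eq_true hb).1
    replace ha := of_decide_eq_true ha
    replace hb' := of_decide_eq_false hb'
    have hab' : rowSupport M a ⊆ rowSupport M b' :=
      rowSupport_subset_iff.2 fun h => (hpat true false).1 h rfl
    obtain rfl : b' = b := by
      by_contra h
      exact hb' ⟨ha.1.trans hab', h⟩
    obtain ⟨j, hja, hjb⟩ := (hpat false true).2 (by simp)
    have : M a j = true := mem_rowSupport.1 (ha.1 (hib ▸ mem_rowSupport.2 hjb))
    simp [hja] at this

lemma Saturated.succ_le_of_isCol_zero (hM : Saturated (Kfull 2) M)
    (h0 : IsCol M fun _ => false) : n + 1 ≤ m := by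
  classical
  have hup : Function.Injective (upSet M) := fun i i' h =>
    hM.rowSupport_injective h0 (subset_antisymm
      (of_decide_eq_true ((congrFun h i').trans (decide_eq_true subset_rfl)))
      (of_decide_eq_true ((congrFun h i).symm.trans (decide_eq_true subset_rfl))))
  have hzero : (fun _ => false) ∉ univ.image (upSet M) := by
    simp only [mem_image, mem_univ, true_and, not_exists]
    exact fun i h => by simpa [upSet] using congrFun h i
  calc n + 1 = #(insert (fun _ => false) (univ.image (upSet M))) := by
        rw [card_insert_of_notMem hzero, card_image_of_injective _ hup, card_univ,
          Fintype.card_fin]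
    _ ≤ #(univ.image fun j i => M i j) := card_le_card ?_
    _ ≤ m := card_image_le.trans (by simp)
  intro C hC
  rw [← isCol_iff_mem_image]
  obtain rfl | ⟨i, -, rfl⟩ := mem_insert.1 hC |>.imp_right mem_image.1
  exacts [h0, hM.isCol_upSet h0 i]

lemma Saturated.succ_le (hM : Saturated (Kfull 2) M) : n + 1 ≤ m := by
  rcases Nat.eq_zero_or_pos m with rfl | hm
  · obtain ⟨a, b, -, hsh⟩ :=
      isSubmatrix_Kfull_two_iff.1 (hM.2.2 (fun _ => false) fun ⟨j, _⟩ => j.elim0)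
    simpa [HasPattern] using hasPattern_addCol_iff.1 (hsh true true)
  · exact (hM.xorRows _).succ_le_of_isCol_zero (isCol_xorRows_col_self M ⟨0, hm⟩)

end Sat

section UnitCols

def unitCols (n : ℕ) : Fin n → Fin (n + 1) → Bool :=
  fun i => Fin.cons false fun k => decide (i = k)

variable {n : ℕ}

lemma simple_unitCols : Simple' (unitCols n) := by
  intro j₁ j₂ h
  induction j₁ using Fin.cases with
  | zero =>
    induction j₂ using Fin.cases with
    | zero => rfl
    | succ k₂ => simpa [unitCols] using h k₂
  | succ k₁ =>
    induction j₂ using Fin.cases with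
    | zero => simpa [unitCols] using h k₁
    | succ k₂ => simpa [unitCols] using h k₁

lemma exists_ne_of_not_isCol_unitCols {C : Fin n → Bool} (hC : ¬ IsCol (unitCols n) C) :
    ∃ a b, a ≠ b ∧ C a = true ∧ C b = true := by
  by_contra! h
  refine hC ?_
  by_cases hC1 : ∃ a, C a = true
  · obtain ⟨a, ha⟩ := hC1
    refine ⟨a.succ, fun i => ?_⟩
    obtain rfl | hi := eq_or_ne i a
    · simp [unitCols, ha]
    · simpa [unitCols, hi, ha] using h i a hi
  · simp only [not_exists, Bool.not_eq_true] at hC1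
    exact ⟨0, fun i => by simp [unitCols, hC1 i]⟩

lemma saturated_unitCols : Saturated (Kfull 2) (unitCols n) := by
  refine ⟨simple_unitCols, ?_, fun C hC => ?_⟩
  · rintro h
    obtain ⟨a, b, hab, hsh⟩ := isSubmatrix_Kfull_two_iff.1 h
    obtain ⟨j, ha, hb⟩ := hsh true true
    induction j using Fin.cases with
    | zero => simp [unitCols] at ha
    | succ k => simp_all [unitCols]
  · obtain ⟨a, b, hab, ha, hb⟩ := exists_ne_of_not_isCol_unitCols hC
    refine isSubmatrix_Kfull_two_iff.2 ⟨a, b, hab, fun p q => hasPattern_addCol_iff.2 ?_⟩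
    cases p <;> cases q
    · exact Or.inl ⟨0, by simp [unitCols]⟩
    · exact Or.inl ⟨b.succ, by simpa [unitCols] using hab⟩
    · exact Or.inl ⟨a.succ, by simpa [unitCols] using hab.symm⟩
    · exact Or.inr ⟨ha, hb⟩

end UnitCols

theorem stmt_5_general (n : ℕ) :
    IsLeast (satSet (Kfull 2) n) (n + 1) ∧ IsGreatest (forbSet (Kfull 2) n) (n + 1) :=
  ⟨⟨⟨unitCols n, saturated_unitCols⟩, fun _ ⟨_, hM⟩ => hM.succ_le⟩,
    ⟨⟨unitCols n, saturated_unitCols.1, saturated_unitCols.2.1⟩,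
      fun _ ⟨_, hM, hfree⟩ => le_succ_of_simple_of_not_isSubmatrix hM hfree⟩⟩

theorem stmt_5 (n : ℕ) (hn : 1 ≤ n) :
    IsLeast (satSet (Kfull 2) n) (n + 1) ∧ IsGreatest (forbSet (Kfull 2) n) (n + 1) :=
  stmt_5_general n
end

section
/- Let F be the 1-row matrix consisting of l ones, l ≥ 3, and let n ≥ l − 1. Then sat(n, F) = l + 1. -/
/-!
A matrix avoiding `F` is saturated exactly when each missing column `C` has a one in some row
that already carries `l - 1` ones. Hence the zero column is present. If there were at most `l`
columns, some column would be missing (`l < 2 ^ (l - 1) ≤ 2 ^ n`), so some row has `l - 1` ones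
off the zero column: there are exactly `l` columns and that row is all ones off the zero column.
Then every unit column is missing, so every row is all ones off the zero column, and the
`l - 1 ≥ 2` nonzero columns coincide. Conversely, `l` columns whose rows each have exactly one
zero, together with the zero column, form a saturated matrix with `l + 1` columns.
-/

open Finset

def rowWeight {n m : ℕ} (M : Fin n → Fin m → Bool) (i : Fin n) : ℕ :=
  #{j | M i j = true}

theorem isSubmatrix_const_row_iff {α : Type*} [DecidableEq α] {n m : ℕ} (a : α) (l : ℕ)
    (M : Fin n → Fin m → α) :
    IsSubmatrix (fun (_ : Fin 1) (_ : Fin l) => a) M ↔ ∃ i, l ≤ #{j | M i j = a} := by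
  constructor
  · rintro ⟨r, s, -, hs, h⟩
    refine ⟨r 0, ?_⟩
    calc l = #(univ.image s) := by
          rw [card_image_of_injective _ hs, card_univ, Fintype.card_fin]
      _ ≤ _ := card_le_card fun j hj => by
        obtain ⟨k, -, rfl⟩ := mem_image.mp hj
        simp [h 0 k]
  · rintro ⟨i, hi⟩
    obtain ⟨T, hT, hTl⟩ := exists_subset_card_eq hi
    refine ⟨fun _ => i, fun k => T.orderEmbOfFin hTl k, fun _ _ _ => Subsingleton.elim _ _,
      (T.orderEmbOfFin hTl).injective, fun _ k => ?_⟩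
    exact (mem_filter.mp (hT (T.orderEmbOfFin_mem hTl k))).2

theorem rowWeight_addCol {n m : ℕ} (M : Fin n → Fin m → Bool) (C : Fin n → Bool) (i : Fin n) :
    rowWeight (addCol M C) i = rowWeight M i + (C i).toNat := by
  rw [rowWeight, rowWeight, card_filter, card_filter, Fin.sum_univ_castSucc]
  cases h : C i <;> simp [addCol, h]

theorem saturated_iff {n m l : ℕ} (M : Fin n → Fin m → Bool) :
    Saturated (fun (_ : Fin 1) (_ : Fin l) => true) M ↔
      Simple' M ∧ (∀ i, rowWeight M i < l) ∧
        ∀ C, ¬ IsCol M C → ∃ i, C i = true ∧ rowWeight M i + 1 = l := by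
  simp only [Saturated, isSubmatrix_const_row_iff, not_exists, not_le]
  refine and_congr_right fun _ => ?_
  constructor
  · rintro ⟨hfree, hsat⟩
    refine ⟨hfree, fun C hC => ?_⟩
    obtain ⟨i, hi⟩ := hsat C hC
    change l ≤ rowWeight (addCol M C) i at hi
    have : rowWeight M i < l := hfree i
    cases hCi : C i <;> rw [rowWeight_addCol, hCi] at hi
    · simp only [Bool.toNat_false] at hi; omega
    · exact ⟨i, hCi, by simp only [Bool.toNat_true] at hi; omega⟩
  · rintro ⟨hfree, hsat⟩
    refine ⟨hfree, fun C hC => ?_⟩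
    obtain ⟨i, hCi, hi⟩ := hsat C hC
    refine ⟨i, ?_⟩
    change l ≤ rowWeight (addCol M C) i
    rw [rowWeight_addCol, hCi, Bool.toNat_true, hi]

theorem exists_not_isCol {α : Type*} [Fintype α] {n m : ℕ} (M : Fin n → Fin m → α)
    (hm : m < Fintype.card α ^ n) : ∃ C, ¬ IsCol M C := by
  by_contra! h
  have hsurj : Function.Surjective fun j i => M i j := fun C =>
    let ⟨j, hj⟩ := h C
    ⟨j, funext hj⟩
  have := Fintype.card_le_of_surjective _ hsurj
  simp only [Fintype.card_fin, Fintype.card_fun] at this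
  omega

theorem rowWeight_lt_of_eq_false {n m : ℕ} {M : Fin n → Fin m → Bool} {i : Fin n} {j₀ : Fin m}
    (hj₀ : M i j₀ = false) : rowWeight M i < m := by
  calc rowWeight M i ≤ #(univ.erase j₀) :=
        card_le_card fun j hj => mem_erase.mpr ⟨by rintro rfl; simp_all, mem_univ j⟩
    _ < m := by
      rw [card_erase_of_mem (mem_univ _), card_univ, Fintype.card_fin]
      have := j₀.is_lt
      omega

theorem eq_true_of_rowWeight {n m : ℕ} {M : Fin n → Fin m → Bool} {i : Fin n} {j₀ j : Fin m}
    (hj₀ : M i j₀ = false) (hw : m ≤ rowWeight M i + 1) (hj : j ≠ j₀) : M i j = true := by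
  by_contra hij
  have : rowWeight M i ≤ #((univ.erase j₀).erase j) :=
    card_le_card fun k hk => by
      simp only [mem_filter] at hk
      simp only [mem_erase, mem_univ, and_true]
      exact ⟨by rintro rfl; exact hij hk.2, by rintro rfl; simp_all⟩
  rw [card_erase_of_mem (mem_erase.mpr ⟨hj, mem_univ j⟩), card_erase_of_mem (mem_univ _),
    card_univ, Fintype.card_fin] at this
  have := j.is_lt
  omega

theorem lt_two_pow_pred {l : ℕ} (hl : 3 ≤ l) : l < 2 ^ (l - 1) := by
  induction l, hl using Nat.le_induction with
  | base => norm_num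
  | succ k hk ih =>
    obtain ⟨k, rfl⟩ := Nat.exists_eq_add_of_le' (by omega : 1 ≤ k)
    simp only [Nat.add_sub_cancel, pow_succ] at ih ⊢
    omega

theorem lt_of_saturated {l n m : ℕ} (hl : 3 ≤ l) (hn : l - 1 ≤ n) {M : Fin n → Fin m → Bool}
    (hM : Saturated (fun (_ : Fin 1) (_ : Fin l) => true) M) : l < m := by
  obtain ⟨hsimple, -, hfull⟩ := (saturated_iff M).mp hM
  obtain ⟨j₀, hj₀⟩ : IsCol M fun _ => false := by
    by_contra h
    obtain ⟨i, hi, -⟩ := hfull _ h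
    exact Bool.false_ne_true hi
  by_contra! hml
  obtain ⟨C, hC⟩ := exists_not_isCol M <| by
    calc m < 2 ^ (l - 1) := hml.trans_lt (lt_two_pow_pred hl)
      _ ≤ 2 ^ n := Nat.pow_le_pow_right two_pos hn
      _ = _ := by simp
  obtain ⟨i₀, -, hi₀⟩ := hfull C hC
  have hlm := rowWeight_lt_of_eq_false (hj₀ i₀)
  have hrow₀ (j) (hj : j ≠ j₀) : M i₀ j = true := eq_true_of_rowWeight (hj₀ i₀) (by omega) hj
  -- the unit column at a row `i ≠ i₀` is missing, since every column but `j₀` has a one at `i₀`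
  have hrow (i) (j) (hj : j ≠ j₀) : M i j = true := by
    by_cases hi : i = i₀
    · exact hi ▸ hrow₀ j hj
    obtain ⟨i', hi', hw⟩ := hfull (fun k => decide (k = i)) <| by
      rintro ⟨j', hj'⟩
      by_cases hj'₀ : j' = j₀
      · simpa [hj'₀, hj₀] using hj' i
      · simpa [hrow₀ j' hj'₀, Ne.symm hi] using hj' i₀
    obtain rfl : i' = i := by simpa using hi'
    exact eq_true_of_rowWeight (hj₀ i') (by omega) hj
  obtain ⟨a, ha, b, hb, hab⟩ := one_lt_card.mp <| show 1 < #(univ.erase j₀) by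
    rw [card_erase_of_mem (mem_univ _), card_univ, Fintype.card_fin]; omega
  exact hab <| hsimple a b fun i => by
    rw [hrow i a (ne_of_mem_erase ha), hrow i b (ne_of_mem_erase hb)]

/-- Column `j < l` has its only zeros in row `j` (in rows `≥ l - 1` when `j = l - 1`); column `l`
is zero. -/
def satMatrix (l n : ℕ) : Fin n → Fin (l + 1) → Bool :=
  fun i j => decide ((j : ℕ) < l ∧ (j : ℕ) ≠ min (i : ℕ) (l - 1))

theorem satMatrix_simple {l n : ℕ} (hl : 2 ≤ l) (hn₂ : 2 ≤ n) (hn : l - 1 ≤ n) :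
    Simple' (satMatrix l n) := by
  have exists_ne (j₁ j₂ : Fin (l + 1)) (hlt : (j₁ : ℕ) < j₂) :
      ∃ i, satMatrix l n i j₁ ≠ satMatrix l n i j₂ := by
    by_cases h₂ : (j₂ : ℕ) < l
    · exact ⟨⟨j₁, by omega⟩, by simp only [satMatrix, ne_eq, decide_eq_decide]; omega⟩
    · by_cases h₁ : (j₁ : ℕ) = 0
      · exact ⟨⟨1, by omega⟩, by simp only [satMatrix, ne_eq, decide_eq_decide]; omega⟩
      · exact ⟨⟨0, by omega⟩, by simp only [satMatrix, ne_eq, decide_eq_decide]; omega⟩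
  intro j₁ j₂ h
  rcases lt_trichotomy (j₁ : ℕ) j₂ with hlt | heq | hgt
  · obtain ⟨i, hi⟩ := exists_ne j₁ j₂ hlt; exact absurd (h i) hi
  · exact Fin.ext heq
  · obtain ⟨i, hi⟩ := exists_ne j₂ j₁ hgt; exact absurd (h i).symm hi

theorem rowWeight_satMatrix (l n : ℕ) (i : Fin n) : rowWeight (satMatrix l n) i = l - 1 := by
  have hrow : ({j | satMatrix l n i j = true} : Finset _).map Fin.valEmbedding =
      (range l).erase (min i (l - 1)) := by
    ext x
    simp only [mem_map, mem_filter, mem_univ, true_and, satMatrix, decide_eq_true_eq,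
      Fin.valEmbedding_apply, mem_erase, mem_range]
    constructor
    · rintro ⟨j, hj, rfl⟩; exact ⟨hj.2, hj.1⟩
    · rintro ⟨hx, hxl⟩; exact ⟨⟨x, by omega⟩, ⟨hxl, hx⟩, rfl⟩
  rw [rowWeight, ← card_map, hrow, card_erase_eq_ite, card_range]
  split_ifs with h <;> simp only [mem_range] at h <;> omega

theorem satMatrix_saturated {l n : ℕ} (hl : 2 ≤ l) (hn₂ : 2 ≤ n) (hn : l - 1 ≤ n) :
    Saturated (fun (_ : Fin 1) (_ : Fin l) => true) (satMatrix l n) := by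
  refine (saturated_iff _).mpr ⟨satMatrix_simple hl hn₂ hn, fun i => ?_, fun C hC => ?_⟩
  · rw [rowWeight_satMatrix]; omega
  · obtain ⟨i, hi⟩ : ∃ i, C i = true := by
      by_contra! h
      exact hC ⟨Fin.last l, fun i => by simp [satMatrix, h i]⟩
    exact ⟨i, hi, by rw [rowWeight_satMatrix]; omega⟩

theorem stmt_9 (l n : ℕ) (hl : 3 ≤ l) (hn : l - 1 ≤ n) :
    IsLeast (satSet (fun (_ : Fin 1) (_ : Fin l) => true) n) (l + 1) :=
  ⟨⟨satMatrix l n, satMatrix_saturated (by omega) (by omega) hn⟩,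
    fun _ ⟨_, hM⟩ => lt_of_saturated hl hn hM⟩
end

section
/- For every l ≥ 3 and n ≥ 3, any lT_2^2-saturated simple n-row 0-1 matrix has at least 2n + 1 columns; i.e., sat(n, lT_2^2) ≥ 2n + 1. -/
/-!
Read the columns of `M` as subsets of the rows. Freeness says that every pair of rows lies in at
most `l - 1` columns, saturation that every missing set contains a pair lying in exactly `l - 1`
columns. Hence all `n + 1` sets of size at most one are columns, and it remains to find `n` columns
of size at least two. If some row lies in fewer than `l - 1` of these, every pair through it is a
column, and a column through two further rows makes `n`. Otherwise the incidence map
`x ↦ (∑_{i ∈ C} xᵢ)_C` is injective, so again there are at least `n` of them.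
-/

open Finset

section Codegree

variable {ι : Type*} [DecidableEq ι]

def codegree (𝒞 : Finset (Finset ι)) (i j : ι) : ℕ := #{C ∈ 𝒞 | i ∈ C ∧ j ∈ C}

theorem codegree_comm (𝒞 : Finset (Finset ι)) (i j : ι) : codegree 𝒞 i j = codegree 𝒞 j i := by
  simp only [codegree, and_comm]

theorem codegree_le_codegree_self (𝒞 : Finset (Finset ι)) (i j : ι) :
    codegree 𝒞 i j ≤ codegree 𝒞 i i :=
  card_le_card <| monotone_filter_right _ fun _ _ h => ⟨h.1, h.1⟩

theorem mem_of_codegree_eq_codegree_self {𝒞 : Finset (Finset ι)} {i j : ι}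
    (h : codegree 𝒞 i j = codegree 𝒞 i i) {C : Finset ι} (hC : C ∈ 𝒞) (hiC : i ∈ C) : j ∈ C := by
  have hsub : {C ∈ 𝒞 | i ∈ C ∧ j ∈ C} ⊆ {C ∈ 𝒞 | i ∈ C ∧ i ∈ C} :=
    monotone_filter_right _ fun _ _ h => ⟨h.1, h.1⟩
  have heq := eq_of_subset_of_card_le hsub h.ge
  have : C ∈ {C ∈ 𝒞 | i ∈ C ∧ i ∈ C} := mem_filter.2 ⟨hC, hiC, hiC⟩
  rw [← heq] at this
  exact (mem_filter.1 this).2.2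

theorem codegree_filter_two_le_card (𝒞 : Finset (Finset ι)) {i j : ι} (hij : i ≠ j) :
    codegree {C ∈ 𝒞 | 2 ≤ #C} i j = codegree 𝒞 i j := by
  simp only [codegree, filter_filter]
  congr 1
  refine filter_congr fun C _ => and_iff_right_of_imp fun h => ?_
  exact (card_pair hij).symm.le.trans
    (card_le_card (insert_subset h.1 (singleton_subset_iff.2 h.2)))

structure IsPairSaturated (L : ℕ) (𝒞 : Finset (Finset ι)) : Prop where
  codegree_le : ∀ ⦃i j⦄, i ≠ j → codegree 𝒞 i j ≤ L
  exists_codegree_eq : ∀ ⦃B : Finset ι⦄, 2 ≤ #B → B ∉ 𝒞 →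
    ∃ i ∈ B, ∃ j ∈ B, i ≠ j ∧ codegree 𝒞 i j = L

namespace IsPairSaturated

variable {L : ℕ} {𝒞 : Finset (Finset ι)}

theorem pair_mem (h : IsPairSaturated L 𝒞) {i j : ι} (hij : i ≠ j) (hL : codegree 𝒞 i j ≠ L) :
    {i, j} ∈ 𝒞 := by
  by_contra hB
  obtain ⟨a, ha, b, hb, hab, habL⟩ := h.exists_codegree_eq (card_pair hij).ge hB
  simp only [mem_insert, mem_singleton] at ha hb
  rcases ha with rfl | rfl <;> rcases hb with rfl | rfl
  all_goals first | exact hab rfl | exact hL habL | exact hL (codegree_comm 𝒞 _ _ ▸ habL)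

theorem codegree_pos (h : IsPairSaturated L 𝒞) (hL : 0 < L) {i j : ι} (hij : i ≠ j) :
    0 < codegree 𝒞 i j := by
  by_cases hiL : codegree 𝒞 i j = L
  · exact hiL ▸ hL
  · exact card_pos.2 ⟨{i, j}, mem_filter.2 ⟨h.pair_mem hij hiL, by simp, by simp⟩⟩

end IsPairSaturated

theorem isPairSaturated_filter_two_le_card {L : ℕ} {𝒜 : Finset (Finset ι)}
    (hle : ∀ ⦃i j⦄, i ≠ j → codegree 𝒜 i j ≤ L)
    (hsat : ∀ B ∉ 𝒜, ∃ i ∈ B, ∃ j ∈ B, i ≠ j ∧ codegree 𝒜 i j = L) :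
    IsPairSaturated L {A ∈ 𝒜 | 2 ≤ #A} where
  codegree_le i j hij := (codegree_filter_two_le_card 𝒜 hij).trans_le (hle hij)
  exists_codegree_eq B hB hB𝒜 := by
    obtain ⟨i, hi, j, hj, hij, hiL⟩ := hsat B fun h => hB𝒜 (mem_filter.2 ⟨h, hB⟩)
    exact ⟨i, hi, j, hj, hij, (codegree_filter_two_le_card 𝒜 hij).trans hiL⟩

end Codegree

section Counting

variable {ι : Type*} [DecidableEq ι] [Fintype ι]

theorem card_le_card_of_pair_mem {𝒞 : Finset (Finset ι)} {i j k : ι} (hji : j ≠ i) (hki : k ≠ i)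
    (hjk : j ≠ k) (hpair : ∀ x, x ≠ i → {i, x} ∈ 𝒞) {C : Finset ι} (hC : C ∈ 𝒞) (hjC : j ∈ C)
    (hkC : k ∈ C) : Fintype.card ι ≤ #𝒞 := by
  set P := (univ.erase i).image fun x => ({i, x} : Finset ι)
  have hP : #P = Fintype.card ι - 1 := by
    rw [card_image_of_injOn, card_erase_of_mem (mem_univ i), card_univ]
    intro x hx y hy hxy
    have : x ∈ ({i, y} : Finset ι) := by
      rw [← show ({i, x} : Finset ι) = {i, y} from hxy]; simp
    simpa [ne_of_mem_erase (mem_coe.1 hx)] using this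
  have hCP : C ∉ P := by
    simp only [P, mem_image]
    rintro ⟨x, -, rfl⟩
    simp only [mem_insert, mem_singleton, hji, hki, false_or] at hjC hkC
    exact hjk (hjC.trans hkC.symm)
  have hPC : insert C P ⊆ 𝒞 :=
    insert_subset hC (image_subset_iff.2 fun x hx => hpair x (ne_of_mem_erase hx))
  have := Fintype.card_pos_iff.2 ⟨i⟩
  calc Fintype.card ι = #(insert C P) := by rw [card_insert_of_notMem hCP, hP]; omega
    _ ≤ #𝒞 := card_le_card hPC

theorem sum_sum_codegree_mul {R : Type*} [CommSemiring R] (𝒞 : Finset (Finset ι)) (x : ι → R) :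
    ∑ i, ∑ j, (codegree 𝒞 i j : R) * (x i * x j) = ∑ C ∈ 𝒞, (∑ i ∈ C, x i) ^ 2 := by
  simp_rw [codegree, natCast_card_filter, sum_mul, sq, sum_mul_sum]
  rw [sum_congr rfl fun i _ => sum_comm, sum_comm]
  refine sum_congr rfl fun C _ => ?_
  simp_rw [ite_and, ite_mul, one_mul, zero_mul, sum_ite_irrel, sum_const_zero, sum_ite_mem,
    univ_inter]

theorem card_le_card_of_forall_sum_eq_zero {K : Type*} [Field K] {𝒞 : Finset (Finset ι)}
    (h : ∀ x : ι → K, (∀ C ∈ 𝒞, ∑ i ∈ C, x i = 0) → x = 0) : Fintype.card ι ≤ #𝒞 := by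
  let A : Matrix 𝒞 ι K := fun C i => if i ∈ (C : Finset ι) then 1 else 0
  have hA : Function.Injective A.mulVecLin := by
    refine (injective_iff_map_eq_zero _).2 fun x hx => h x fun C hC => ?_
    have := congrFun (show A.mulVec x = 0 from hx) ⟨C, hC⟩
    simpa [A, Matrix.mulVec, dotProduct, ite_mul, sum_ite_mem] using this
  simpa using LinearMap.finrank_le_finrank_of_injective hA

theorem codegree_self_le_one_of_forall_codegree_eq {𝒞 : Finset (Finset ι)} {i : ι}
    (h : ∀ j, codegree 𝒞 i j = codegree 𝒞 i i) : codegree 𝒞 i i ≤ 1 := by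
  have huniv : ∀ C ∈ 𝒞, i ∈ C → C = univ := fun C hC hiC =>
    eq_univ_of_forall fun j => mem_of_codegree_eq_codegree_self (h j) hC hiC
  refine card_le_one.2 fun C hC D hD => ?_
  simp only [mem_filter] at hC hD
  rw [huniv C hC.1 hC.2.1, huniv D hD.1 hD.2.1]

end Counting

namespace IsPairSaturated

variable {ι : Type*} [DecidableEq ι] [Fintype ι] {L : ℕ} {𝒞 : Finset (Finset ι)}

/-- On the kernel of the incidence map the quadratic form
`∑ᵢⱼ (L - codegree 𝒞 i j) xᵢ xⱼ = L (∑ xᵢ)² - ∑_C (∑_{i ∈ C} xᵢ)²` is nonnegative, while each of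
its terms is nonpositive: diagonal ones by `hdeg`, off-diagonal ones because `codegree 𝒞 i j < L`
puts `{i, j}` in `𝒞`, forcing `xⱼ = -xᵢ`. So every term vanishes, and a point `i₀` with
`x i₀ ≠ 0` would have all of its `L ≥ 2` members equal to `univ`. -/
theorem eq_zero_of_forall_sum_eq_zero {K : Type*} [Field K] [LinearOrder K] [IsStrictOrderedRing K]
    (h : IsPairSaturated L 𝒞) (hL : 2 ≤ L) (hdeg : ∀ i, L ≤ codegree 𝒞 i i) {x : ι → K}
    (hx : ∀ C ∈ 𝒞, ∑ i ∈ C, x i = 0) : x = 0 := by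
  let w : ι × ι → K := fun p => ((L : K) - codegree 𝒞 p.1 p.2) * (x p.1 * x p.2)
  have hanti : ∀ i j, i ≠ j → codegree 𝒞 i j ≠ L → x j = -x i := fun i j hij hne => by
    have := hx _ (h.pair_mem hij hne)
    rw [sum_pair hij] at this
    linear_combination this
  have hw_nonpos : ∀ p ∈ univ, w p ≤ 0 := by
    rintro ⟨i, j⟩ -
    rcases eq_or_ne i j with rfl | hij
    · have : (L : K) ≤ codegree 𝒞 i i := by exact_mod_cast hdeg i
      exact mul_nonpos_of_nonpos_of_nonneg (by linarith) (mul_self_nonneg _)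
    rcases eq_or_ne (codegree 𝒞 i j) L with hL | hL
    · simp [w, hL]
    · have : (codegree 𝒞 i j : K) ≤ L := by exact_mod_cast h.codegree_le hij
      simp only [w, hanti i j hij hL, mul_neg]
      exact neg_nonpos.2 (mul_nonneg (by linarith) (mul_self_nonneg _))
  have hw_sum : ∑ p, w p = L * (∑ i, x i) ^ 2 := by
    have hquad : ∑ C ∈ 𝒞, (∑ i ∈ C, x i) ^ 2 = 0 := sum_eq_zero fun C hC => by simp [hx C hC]
    simp only [w, Fintype.sum_prod_type, sub_mul, sum_sub_distrib, sum_sum_codegree_mul, hquad,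
      sub_zero]
    simp_rw [sq, sum_mul_sum, mul_sum]
  have hw_zero : ∀ p ∈ univ, w p = 0 :=
    (sum_eq_zero_iff_of_nonpos hw_nonpos).1 <|
      (sum_nonpos hw_nonpos).antisymm (hw_sum ▸ by positivity)
  by_contra hx0
  obtain ⟨i₀, hi₀⟩ : ∃ i, x i ≠ 0 := Function.ne_iff.1 hx0
  have hfull : ∀ j, codegree 𝒞 i₀ j = L := by
    intro j
    by_contra hne
    have hxj : x j ≠ 0 := by
      rcases eq_or_ne i₀ j with rfl | hij
      · exact hi₀
      · rw [hanti i₀ j hij hne]; exact neg_ne_zero.2 hi₀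
    have : ((L : K) - codegree 𝒞 i₀ j) = 0 := by
      simpa [w, hi₀, hxj] using hw_zero (i₀, j) (mem_univ _)
    exact hne (by exact_mod_cast (sub_eq_zero.1 this).symm)
  have := codegree_self_le_one_of_forall_codegree_eq fun j => (hfull j).trans (hfull i₀).symm
  have := hfull i₀
  omega

theorem card_le (h : IsPairSaturated L 𝒞) (hL : 2 ≤ L) (hι : 3 ≤ Fintype.card ι) :
    Fintype.card ι ≤ #𝒞 := by
  by_cases hdeg : ∀ i, L ≤ codegree 𝒞 i i
  · exact card_le_card_of_forall_sum_eq_zero (K := ℚ) fun x hx =>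
      h.eq_zero_of_forall_sum_eq_zero hL hdeg hx
  push Not at hdeg
  obtain ⟨i, hi⟩ := hdeg
  have hpair : ∀ x, x ≠ i → {i, x} ∈ 𝒞 := fun x hx =>
    h.pair_mem hx.symm ((codegree_le_codegree_self 𝒞 i x).trans_lt hi).ne
  obtain ⟨j, hj, k, hk, hjk⟩ := one_lt_card.1 <| show 1 < #(univ.erase i) by
    rw [card_erase_of_mem (mem_univ i), card_univ]; omega
  obtain ⟨C, hC⟩ := card_pos.1 (h.codegree_pos (by omega) hjk)
  rw [mem_filter] at hC
  exact card_le_card_of_pair_mem (ne_of_mem_erase hj) (ne_of_mem_erase hk) hjk hpair hC.1 hC.2.1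
    hC.2.2

end IsPairSaturated

section Family

variable {ι : Type*} [DecidableEq ι] [Fintype ι] {L : ℕ} {𝒜 : Finset (Finset ι)}

theorem card_add_one_le_card_filter_card_lt_two (h : ∀ B : Finset ι, #B < 2 → B ∈ 𝒜) :
    Fintype.card ι + 1 ≤ #{A ∈ 𝒜 | #A < 2} := by
  calc Fintype.card ι + 1 = #(insert ∅ (univ.map ⟨singleton, singleton_injective⟩)) := by
        rw [card_insert_of_notMem (by simp), card_map, card_univ]
    _ ≤ #{A ∈ 𝒜 | #A < 2} := card_le_card fun B hB => by
        have hB2 : #B < 2 := by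
          rcases mem_insert.1 hB with rfl | hB
          · simp
          · obtain ⟨i, -, rfl⟩ := mem_map.1 hB
            simp
        exact mem_filter.2 ⟨h B hB2, hB2⟩

theorem two_mul_card_add_one_le_card (hL : 2 ≤ L) (hι : 3 ≤ Fintype.card ι)
    (hle : ∀ ⦃i j⦄, i ≠ j → codegree 𝒜 i j ≤ L)
    (hsat : ∀ B ∉ 𝒜, ∃ i ∈ B, ∃ j ∈ B, i ≠ j ∧ codegree 𝒜 i j = L) :
    2 * Fintype.card ι + 1 ≤ #𝒜 := by
  have hheavy := (isPairSaturated_filter_two_le_card hle hsat).card_le hL hι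
  have hlight := card_add_one_le_card_filter_card_lt_two fun B hB => by
    by_contra hB𝒜
    obtain ⟨i, hi, j, hj, hij, -⟩ := hsat B hB𝒜
    have := card_le_card (insert_subset hi (singleton_subset_iff.2 hj))
    rw [card_pair hij] at this
    omega
  have hsplit := card_filter_add_card_filter_not (s := 𝒜) fun A => 2 ≤ #A
  simp only [not_le] at hsplit
  omega

end Family

section Matrix

variable {n m : ℕ}

def colSupport (M : Fin n → Fin m → Bool) (t : Fin m) : Finset (Fin n) := {i | M i t = true}

def colSupports (M : Fin n → Fin m → Bool) : Finset (Finset (Fin n)) := univ.image (colSupport M)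

theorem colSupport_injective {M : Fin n → Fin m → Bool} (hM : Simple' M) :
    Function.Injective (colSupport M) := fun s t hst =>
  hM s t fun i => Bool.eq_iff_iff.2 <| by simpa [colSupport] using congrArg (i ∈ ·) hst

theorem card_colSupports {M : Fin n → Fin m → Bool} (hM : Simple' M) : #(colSupports M) = m := by
  rw [colSupports, card_image_of_injective _ (colSupport_injective hM), card_univ,
    Fintype.card_fin]

theorem codegree_colSupports {M : Fin n → Fin m → Bool} (hM : Simple' M) (i j : Fin n) :
    codegree (colSupports M) i j = #{t | M i t = true ∧ M j t = true} := by
  rw [codegree, colSupports, filter_image, card_image_of_injective _ (colSupport_injective hM)]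
  simp [colSupport]

theorem isSubmatrix_allOnes_iff {l : ℕ} (M : Fin n → Fin m → Bool) :
    IsSubmatrix (fun (_ : Fin 2) (_ : Fin l) => true) M ↔
      ∃ i j, i ≠ j ∧ l ≤ #{t | M i t = true ∧ M j t = true} := by
  constructor
  · rintro ⟨r, s, hr, hs, hrs⟩
    refine ⟨r 0, r 1, hr.ne (by decide), ?_⟩
    calc l = #(univ.map ⟨s, hs⟩) := by simp
      _ ≤ _ := card_le_card fun t ht => by
        obtain ⟨b, -, rfl⟩ := mem_map.1 ht
        simp [hrs]
  · rintro ⟨i, j, hij, hl⟩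
    obtain ⟨T, hT, hTl⟩ := exists_subset_card_eq hl
    refine ⟨![i, j], T.orderEmbOfFin hTl, ?_, (T.orderEmbOfFin hTl).injective, fun a b => ?_⟩
    · intro a b hab
      fin_cases a <;> fin_cases b
      all_goals first | rfl | exact absurd hab hij | exact absurd hab.symm hij
    · have := mem_filter.1 (hT (T.orderEmbOfFin_mem hTl b))
      fin_cases a <;> simp [this.2.1, this.2.2]

theorem card_filter_addCol (M : Fin n → Fin m → Bool) (C : Fin n → Bool) (i j : Fin n) :
    #{t | addCol M C i t = true ∧ addCol M C j t = true} =
      #{t | M i t = true ∧ M j t = true} + if C i = true ∧ C j = true then 1 else 0 := by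
  rw [card_filter, card_filter, Fin.sum_univ_castSucc]
  simp [addCol]

namespace Saturated

variable {l : ℕ} {M : Fin n → Fin m → Bool}

theorem codegree_colSupports_le (hM : Saturated (fun (_ : Fin 2) (_ : Fin l) => true) M)
    {i j : Fin n} (hij : i ≠ j) : codegree (colSupports M) i j ≤ l - 1 := by
  rw [codegree_colSupports hM.1]
  by_contra! h
  exact hM.2.1 ((isSubmatrix_allOnes_iff M).2 ⟨i, j, hij, by omega⟩)

theorem exists_codegree_colSupports_eq (hM : Saturated (fun (_ : Fin 2) (_ : Fin l) => true) M)
    {B : Finset (Fin n)} (hB : B ∉ colSupports M) :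
    ∃ i ∈ B, ∃ j ∈ B, i ≠ j ∧ codegree (colSupports M) i j = l - 1 := by
  have hcol : ¬ IsCol M (fun i => decide (i ∈ B)) := by
    rintro ⟨t, ht⟩
    exact hB (mem_image.2 ⟨t, mem_univ t, by ext i; simp [colSupport, ht]⟩)
  obtain ⟨i, j, hij, hl⟩ := (isSubmatrix_allOnes_iff _).1 (hM.2.2 _ hcol)
  have hle := hM.codegree_colSupports_le hij
  rw [card_filter_addCol] at hl
  simp only [codegree_colSupports hM.1] at hle ⊢
  split_ifs at hl with hiB
  · simp only [decide_eq_true_eq] at hiB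
    exact ⟨i, hiB.1, j, hiB.2, hij, by omega⟩
  · exact absurd ((isSubmatrix_allOnes_iff M).2 ⟨i, j, hij, by simpa using hl⟩) hM.2.1

end Saturated

end Matrix

theorem stmt_10 (l n : ℕ) (hl : 3 ≤ l) (hn : 3 ≤ n) (m : ℕ) (M : Fin n → Fin m → Bool)
    (hM : Saturated (fun (_ : Fin 2) (_ : Fin l) => true) M) :
    2 * n + 1 ≤ m := by
  have := two_mul_card_add_one_le_card (L := l - 1) (by omega) (by simpa using hn)
    (fun _ _ => hM.codegree_colSupports_le) (fun _ => hM.exists_codegree_colSupports_eq)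
  simpa [card_colSupports hM.1] using this
end

section
/- A simple n-row 0-1 matrix (n ≥ 2) is T_2^1-saturated if and only if its columns are the characteristic vectors of a maximal chain ∅ ⊂ A_1 ⊂ A_2 ⊂ ⋯ ⊂ [n] in the subset lattice of [n]; consequently every T_2^1-saturated n-row matrix has exactly n + 1 columns. -/
def T21 : Fin 2 → Fin 2 → Bool := ![![true, false], ![false, true]]

/-!
Read column `j` of a 0-1 matrix as the set of rows carrying a `1`. A copy of `T21` is exactly a
pair of incomparable column sets, so `T21`-freeness says the column sets form a chain in the
subset lattice of `Fin n`, and saturation says that no further set can be added to it: the chain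
is maximal. In a maximal chain of subsets of an `n`-set the cardinality is injective, and it takes
every value `0, …, n`, because a set squeezed between two consecutive members of the chain would
be comparable with all of them.
-/

open Function Set

section MaxChain

variable {α : Type*}

theorem isChain_range_iff [Preorder α] {ι : Type*} {f : ι → α} :
    IsChain (· ≤ ·) (range f) ↔ ∀ i j, f i ≤ f j ∨ f j ≤ f i :=
  ⟨fun h i j => h.total ⟨i, rfl⟩ ⟨j, rfl⟩, by rintro h _ ⟨i, rfl⟩ _ ⟨j, rfl⟩ -; exact h i j⟩

theorem isMaxChain_iff_forall_mem [Preorder α] {c : Set α} :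
    IsMaxChain (· ≤ ·) c ↔ IsChain (· ≤ ·) c ∧ ∀ a, (∀ b ∈ c, a ≤ b ∨ b ≤ a) → a ∈ c := by
  refine ⟨fun hc => ⟨hc.isChain, fun a ha => ?_⟩, fun ⟨hc, hmax⟩ => ⟨hc, fun t ht hct => ?_⟩⟩
  · have hins := hc.2 (hc.isChain.insert fun b hb _ => ha b hb) (subset_insert a c)
    exact hins ▸ mem_insert a c
  · exact hct.antisymm fun a ha => hmax a fun b hb => ht.total ha (hct hb)

theorem IsChain.subset_of_card_le {c : Set (Finset α)} (hc : IsChain (· ≤ ·) c)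
    {s t : Finset α} (hs : s ∈ c) (ht : t ∈ c) (hst : s.card ≤ t.card) : s ⊆ t :=
  (hc.total hs ht).elim id fun hts => (Finset.eq_of_subset_of_card_le hts hst).ge

theorem IsMaxChain.exists_card_eq [Fintype α] {c : Set (Finset α)}
    (hc : IsMaxChain (· ≤ ·) c) {k : ℕ} (hk : k ≤ Fintype.card α) : ∃ s ∈ c, s.card = k := by
  classical
  induction k with
  | zero => exact ⟨∅, hc.bot_mem, Finset.card_empty⟩
  | succ k ih =>
    obtain ⟨s, hs, rfl⟩ := ih (by omega)
    have hbig : ∃ j, ∃ t ∈ c, s.card < t.card ∧ t.card = j :=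
      ⟨_, Finset.univ, hc.top_mem, by simpa using hk, rfl⟩
    obtain ⟨t, ht, hst, htj⟩ := Nat.find_spec hbig
    have ht_min : ∀ x ∈ c, s.card < x.card → t ⊆ x := fun x hx hsx =>
      hc.isChain.subset_of_card_le ht hx (htj ▸ Nat.find_min' hbig ⟨x, hx, hsx, rfl⟩)
    -- `t` is the next member of the chain above `s`; a set strictly between them is comparable
    -- with the whole chain.
    obtain ⟨u, hsu, hut, hu⟩ := Finset.exists_subsuperset_card_eq
      (hc.isChain.subset_of_card_le hs ht hst.le) (Nat.le_succ _) hst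
    refine ⟨u, (isMaxChain_iff_forall_mem.1 hc).2 u fun x hx => ?_, hu⟩
    by_cases hsx : s.card < x.card
    · exact Or.inl (hut.trans (ht_min x hx hsx))
    · exact Or.inr ((hc.isChain.subset_of_card_le hx hs (not_lt.1 hsx)).trans hsu)

theorem isMaxChain_range_iff [Fintype α] {m : ℕ} {f : Fin m → Finset α} (hf : Injective f) :
    IsMaxChain (· ≤ ·) (range f) ↔ m = Fintype.card α + 1 ∧ ∃ σ : Fin m → Fin m,
      Bijective σ ∧ (∀ j, (f (σ j)).card = j) ∧ Monotone (f ∘ σ) := by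
  constructor
  · intro hc
    let g : Fin m → Fin (Fintype.card α + 1) :=
      fun j => ⟨(f j).card, Nat.lt_succ_of_le (Finset.card_le_univ _)⟩
    have hg : Bijective g := by
      refine ⟨fun j₁ j₂ h => hf ?_, fun k => ?_⟩
      · have hcard : (f j₁).card = (f j₂).card := Fin.mk.inj h
        exact (hc.isChain.subset_of_card_le ⟨j₁, rfl⟩ ⟨j₂, rfl⟩ hcard.le).antisymm
          (hc.isChain.subset_of_card_le ⟨j₂, rfl⟩ ⟨j₁, rfl⟩ hcard.ge)
      · obtain ⟨_, ⟨j, rfl⟩, hj⟩ := hc.exists_card_eq (Nat.lt_succ_iff.1 k.isLt)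
        exact ⟨j, Fin.ext hj⟩
    have hm : m = Fintype.card α + 1 := by simpa using Fintype.card_congr (Equiv.ofBijective g hg)
    subst hm
    let σ := (Equiv.ofBijective g hg).symm
    have hσ : ∀ j, (f (σ j)).card = j := fun j =>
      congrArg Fin.val ((Equiv.ofBijective g hg).apply_symm_apply j)
    refine ⟨rfl, σ, σ.bijective, hσ, fun j₁ j₂ hj => ?_⟩
    exact hc.isChain.subset_of_card_le ⟨_, rfl⟩ ⟨_, rfl⟩ (by simp only [comp_apply, hσ]; exact hj)
  · rintro ⟨hm, σ, hσ, hcard, hmono⟩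
    rw [← hσ.2.range_comp, isMaxChain_iff_forall_mem]
    refine ⟨hmono.isChain_range, fun a ha => ?_⟩
    have hlt : a.card < m := by have := Finset.card_le_univ a; omega
    obtain ⟨_, ⟨j, rfl⟩, hj⟩ : ∃ b ∈ range (f ∘ σ), b.card = a.card := ⟨_, ⟨⟨_, hlt⟩, rfl⟩, hcard _⟩
    refine ⟨j, ?_⟩
    rcases ha _ ⟨j, rfl⟩ with h | h
    · exact (Finset.eq_of_subset_of_card_le h hj.le).symm
    · exact Finset.eq_of_subset_of_card_le h hj.ge

end MaxChain

section ZeroOneMatrix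

variable {ι : Type*} [Fintype ι] {n m : ℕ}

def trueSet (v : ι → Bool) : Finset ι :=
  Finset.univ.filter fun i => v i = true

@[simp]
theorem mem_trueSet {v : ι → Bool} {i : ι} : i ∈ trueSet v ↔ v i = true := by
  simp [trueSet]

theorem trueSet_injective : Injective (trueSet : (ι → Bool) → Finset ι) := fun v w h =>
  funext fun i => Bool.eq_iff_iff.2 (by simpa using Finset.ext_iff.1 h i)

theorem trueSet_surjective : Surjective (trueSet : (ι → Bool) → Finset ι) := by
  classical exact fun A => ⟨fun i => decide (i ∈ A), by ext; simp⟩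

def colSet (M : Fin n → Fin m → Bool) (j : Fin m) : Finset (Fin n) :=
  trueSet fun i => M i j

theorem colSet_injective {M : Fin n → Fin m → Bool} (hM : Simple' M) : Injective (colSet M) :=
  fun _ _ h => hM _ _ (congrFun (trueSet_injective h))

theorem colSet_eq_trueSet_iff {M : Fin n → Fin m → Bool} {j : Fin m} {C : Fin n → Bool} :
    colSet M j = trueSet C ↔ ∀ i, M i j = C i :=
  trueSet_injective.eq_iff.trans funext_iff

theorem isCol_iff_mem_range {M : Fin n → Fin m → Bool} {C : Fin n → Bool} :
    IsCol M C ↔ trueSet C ∈ range (colSet M) := by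
  simp only [IsCol, mem_range, colSet_eq_trueSet_iff]

@[simp]
theorem colSet_addCol_castSucc (M : Fin n → Fin m → Bool) (C : Fin n → Bool) (j : Fin m) :
    colSet (addCol M C) j.castSucc = colSet M j := by
  simp [colSet, addCol]

@[simp]
theorem colSet_addCol_last (M : Fin n → Fin m → Bool) (C : Fin n → Bool) :
    colSet (addCol M C) (Fin.last m) = trueSet C := by
  simp [colSet, addCol]

theorem isSubmatrix_T21_iff {M : Fin n → Fin m → Bool} :
    IsSubmatrix T21 M ↔ ∃ i₁ i₂ j₁ j₂,
      M i₁ j₁ = true ∧ M i₁ j₂ = false ∧ M i₂ j₁ = false ∧ M i₂ j₂ = true := by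
  constructor
  · rintro ⟨r, s, -, -, h⟩
    exact ⟨r 0, r 1, s 0, s 1, h 0 0, h 0 1, h 1 0, h 1 1⟩
  · rintro ⟨i₁, i₂, j₁, j₂, h₁₁, h₁₂, h₂₁, h₂₂⟩
    refine ⟨![i₁, i₂], ![j₁, j₂], injective_pair_iff_ne.2 ?_, injective_pair_iff_ne.2 ?_, ?_⟩
    · rintro rfl; simp_all
    · rintro rfl; simp_all
    · intro a b
      fin_cases a <;> fin_cases b <;> simpa [T21]

theorem not_isSubmatrix_T21_iff {M : Fin n → Fin m → Bool} :
    ¬ IsSubmatrix T21 M ↔ ∀ j₁ j₂, colSet M j₁ ⊆ colSet M j₂ ∨ colSet M j₂ ⊆ colSet M j₁ := by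
  simp only [isSubmatrix_T21_iff, colSet, Finset.subset_iff, mem_trueSet]
  grind

theorem not_isSubmatrix_T21_addCol_iff {M : Fin n → Fin m → Bool} (hM : ¬ IsSubmatrix T21 M)
    {C : Fin n → Bool} :
    ¬ IsSubmatrix T21 (addCol M C) ↔ ∀ j, trueSet C ⊆ colSet M j ∨ colSet M j ⊆ trueSet C := by
  rw [not_isSubmatrix_T21_iff] at hM ⊢
  simp only [Fin.forall_fin_succ', colSet_addCol_castSucc, colSet_addCol_last, hM,
    Finset.Subset.refl, or_self, and_true, implies_true, true_and]
  exact ⟨And.right, fun h => ⟨fun j => (h j).symm, h⟩⟩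

theorem saturated_T21_iff_isMaxChain {M : Fin n → Fin m → Bool} :
    (¬ IsSubmatrix T21 M ∧ ∀ C : Fin n → Bool, ¬ IsCol M C → IsSubmatrix T21 (addCol M C)) ↔
      IsMaxChain (· ≤ ·) (range (colSet M)) := by
  rw [isMaxChain_iff_forall_mem, isChain_range_iff, ← not_isSubmatrix_T21_iff]
  refine and_congr_right fun hM => ?_
  simp only [trueSet_surjective.forall, forall_mem_range, ← isCol_iff_mem_range]
  refine forall_congr' fun C => ?_
  rw [not_imp_comm, not_isSubmatrix_T21_addCol_iff hM]

end ZeroOneMatrix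

theorem stmt_14_general (n m : ℕ) (M : Fin n → Fin m → Bool) (hM : Simple' M) :
    (¬ IsSubmatrix T21 M ∧
      ∀ C : Fin n → Bool, ¬ IsCol M C → IsSubmatrix T21 (addCol M C)) ↔
    (m = n + 1 ∧ ∃ σ : Fin m → Fin m, Function.Bijective σ ∧
      (∀ j : Fin m, (Finset.univ.filter fun i => M i (σ j) = true).card = (j : ℕ)) ∧
      ∀ j₁ j₂ : Fin m, j₁ ≤ j₂ → ∀ i, M i (σ j₁) = true → M i (σ j₂) = true) := by
  rw [saturated_T21_iff_isMaxChain, isMaxChain_range_iff (colSet_injective hM), Fintype.card_fin]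
  simp only [Monotone, comp_apply, Finset.subset_iff, colSet, mem_trueSet]
  rfl

theorem stmt_14 (n m : ℕ) (hn : 2 ≤ n) (M : Fin n → Fin m → Bool) (hM : Simple' M) :
    (¬ IsSubmatrix T21 M ∧
      ∀ C : Fin n → Bool, ¬ IsCol M C → IsSubmatrix T21 (addCol M C)) ↔
    (m = n + 1 ∧ ∃ σ : Fin m → Fin m, Function.Bijective σ ∧
      (∀ j : Fin m, (Finset.univ.filter fun i => M i (σ j) = true).card = (j : ℕ)) ∧
      ∀ j₁ j₂ : Fin m, j₁ ≤ j₂ → ∀ i, M i (σ j₁) = true → M i (σ j₂) = true) :=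
  stmt_14_general n m M hM
end

section
/- No T_2^{≥1}-saturated simple matrix has two equal rows: if M is a simple n-row 0-1 matrix that contains no submatrix T_2^{≥1} = [(0,1)^T,(1,0)^T,(1,1)^T] and such that adding any missing column creates such a submatrix, then all rows of M are pairwise distinct. -/
def T2ge1 : Fin 2 → Fin 3 → Bool := ![![false, true, true], ![true, false, true]]

def Lam {n p : ℕ} (N : Fin n → Fin p → Bool) : Prop :=
  ∀ i i' : Fin n, (∃ j, N i j = true ∧ N i' j = true) →
    (∀ j, N i j = true → N i' j = true) ∨ (∀ j, N i' j = true → N i j = true)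

lemma lam_of_free {n p : ℕ} {N : Fin n → Fin p → Bool} (h : ¬ IsSubmatrix T2ge1 N) :
    Lam N := by
  intro i i' ⟨j₂, h2, h2'⟩
  by_contra hc
  push_neg at hc
  obtain ⟨⟨j₁, ha, hb⟩, ⟨j₀, hc', hd⟩⟩ := hc
  simp only [ne_eq, Bool.not_eq_true] at hb hd
  apply h
  refine ⟨![i, i'], ![j₀, j₁, j₂], ?_, ?_, ?_⟩
  · have hii : i ≠ i' := by rintro rfl; rw [ha] at hb; exact absurd hb (by simp)
    intro a b hab
    fin_cases a <;> fin_cases b <;> simp_all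
  · have h01 : j₀ ≠ j₁ := by rintro rfl; rw [ha] at hd; simp at hd
    have h02 : j₀ ≠ j₂ := by rintro rfl; rw [h2] at hd; simp at hd
    have h12 : j₁ ≠ j₂ := by rintro rfl; rw [h2'] at hb; simp at hb
    intro a b hab
    fin_cases a <;> fin_cases b <;> simp_all
  · intro a b
    fin_cases a <;> fin_cases b <;> simp [T2ge1, ha, hb, hc', hd, h2, h2']

lemma free_of_lam {n p : ℕ} {N : Fin n → Fin p → Bool} (hl : Lam N) :
    ¬ IsSubmatrix T2ge1 N := by
  rintro ⟨r, s, hr, hs, hval⟩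
  have h02 := hval 0 2
  have h12 := hval 1 2
  have h01 := hval 0 1
  have h11 := hval 1 1
  have h00 := hval 0 0
  have h10 := hval 1 0
  simp [T2ge1] at h02 h12 h01 h11 h00 h10
  rcases hl (r 0) (r 1) ⟨s 2, h02, h12⟩ with h | h
  · have := h (s 1) h01; rw [h11] at this; simp at this
  · have := h (s 0) h10; rw [h00] at this; simp at this

theorem stmt_17 (n m : ℕ) (M : Fin n → Fin m → Bool) (hM : Saturated T2ge1 M) :
    ∀ i₁ i₂ : Fin n, (∀ j, M i₁ j = M i₂ j) → i₁ = i₂ := by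
  obtain ⟨hsimple, hfree, hsat⟩ := hM
  have hlamM : Lam M := lam_of_free hfree
  intro i₁ i₂ heq
  by_contra hne
  by_cases hE : ∃ j, M i₁ j = true
  · -- nonempty support case
    obtain ⟨j₀, hj₀⟩ := hE
    set C : Fin n → Bool :=
      fun i => decide (i = i₁ ∨ (i ≠ i₂ ∧ ∀ j, M i₁ j = true → M i j = true)) with hC
    have hCi₁ : C i₁ = true := by simp [hC]
    have hCi₂ : C i₂ = false := by
      simp only [hC, decide_eq_false_iff_not, not_or]
      exact ⟨fun h => hne h.symm, fun h => h.1 rfl⟩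
    have hsupC : ∀ i, C i = true → ∀ j, M i₁ j = true → M i j = true := by
      intro i hi j hj
      simp only [hC, decide_eq_true_eq] at hi
      rcases hi with rfl | ⟨_, h⟩
      · exact hj
      · exact h j hj
    have hnotcol : ¬ IsCol M C := by
      rintro ⟨j, hcol⟩
      have h1 := hcol i₁
      have h2 := hcol i₂
      rw [heq j] at h1
      rw [h1, hCi₁] at h2
      rw [hCi₂] at h2
      exact absurd h2 (by simp)
    have hsub := hsat C hnotcol
    apply free_of_lam ?_ hsub
    -- key lemma
    have key : ∀ a b : Fin n, (∀ j, M a j = true → M b j = true) →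
        (∀ j, addCol M C a j = true → addCol M C b j = true) ∨
        (∀ j, addCol M C b j = true → addCol M C a j = true) := by
      intro a b hab
      by_cases hCa : C a = true
      · by_cases hCb : C b = true
        · left
          intro j hj
          by_cases hjm : (j : ℕ) < m
          · simp only [addCol, dif_pos hjm] at hj ⊢; exact hab _ hj
          · simp only [addCol, dif_neg hjm]; exact hCb
        · -- C a true, C b false
          have hA1a : ∀ j, M i₁ j = true → M a j = true := hsupC a hCa
          simp only [hC, decide_eq_true_eq, not_or, not_and, not_forall] at hCb
          obtain ⟨hbne, hrest⟩ := hCb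
          by_cases hbi₂ : b = i₂
          · subst hbi₂
            right
            intro j hj
            by_cases hjm : (j : ℕ) < m
            · simp only [addCol, dif_pos hjm] at hj ⊢
              have : M i₁ ⟨j, hjm⟩ = true := by rw [heq]; exact hj
              exact hA1a _ this
            · simp only [addCol, dif_neg hjm] at hj
              rw [hCi₂] at hj; exact absurd hj (by simp)
          · obtain ⟨j', hj', hnj'⟩ := hrest hbi₂
            exact absurd (hab j' (hA1a j' hj')) hnj'
      · left
        intro j hj
        by_cases hjm : (j : ℕ) < m
        · simp only [addCol, dif_pos hjm] at hj ⊢; exact hab _ hj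
        · simp only [addCol, dif_neg hjm] at hj; exact absurd hj hCa
    intro i i' ⟨j₂, h2, h2'⟩
    by_cases h2m : (j₂ : ℕ) < m
    · simp only [addCol, dif_pos h2m] at h2 h2'
      rcases hlamM i i' ⟨⟨j₂, h2m⟩, h2, h2'⟩ with h | h
      · exact key i i' h
      · exact (key i' i h).symm
    · simp only [addCol, dif_neg h2m] at h2 h2'
      rcases hlamM i i' ⟨j₀, hsupC i h2 j₀ hj₀, hsupC i' h2' j₀ hj₀⟩ with h | h
      · exact key i i' h
      · exact (key i' i h).symm
  · -- empty support case
    push_neg at hE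
    simp only [Bool.not_eq_true] at hE
    set C : Fin n → Bool := fun i => decide (i = i₁) with hC
    have hnotcol : ¬ IsCol M C := by
      rintro ⟨j, hcol⟩
      have h1 := hcol i₁
      have h2 := hcol i₂
      rw [heq j] at h1
      rw [h1] at h2
      have hne' : i₂ ≠ i₁ := fun h => hne h.symm
      simp [hC, hne'] at h2
    have hsub := hsat C hnotcol
    apply free_of_lam ?_ hsub
    intro i i' ⟨j₂, h2, h2'⟩
    by_cases h2m : (j₂ : ℕ) < m
    · simp only [addCol, dif_pos h2m] at h2 h2'
      by_cases hi : i = i₁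
      · subst hi; rw [hE] at h2; exact absurd h2 (by simp)
      by_cases hi' : i' = i₁
      · subst hi'; rw [hE] at h2'; exact absurd h2' (by simp)
      rcases hlamM i i' ⟨⟨j₂, h2m⟩, h2, h2'⟩ with h | h
      · left
        intro j hj
        by_cases hjm : (j : ℕ) < m
        · simp only [addCol, dif_pos hjm] at hj ⊢; exact h _ hj
        · simp only [addCol, dif_neg hjm] at hj
          simp only [hC, decide_eq_true_eq] at hj; exact absurd hj hi
      · right
        intro j hj
        by_cases hjm : (j : ℕ) < m
        · simp only [addCol, dif_pos hjm] at hj ⊢; exact h _ hj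
        · simp only [addCol, dif_neg hjm] at hj
          simp only [hC, decide_eq_true_eq] at hj; exact absurd hj hi'
    · simp only [addCol, dif_neg h2m] at h2 h2'
      simp only [hC, decide_eq_true_eq] at h2 h2'
      subst h2; subst h2'
      left; intro j hj; exact hj
end
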